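/- arXiv:2105.01469 — 4 statements merged into one kernel-verified Lean document; each statement's English description precedes it below -/
import Mathlib

section
/- Let G be a finite graph in which every vertex is incident to at least one edge, and let P2M(G) ⊆ ℝ^{E(G)} be the perfect 2-matching polytope of G, defined by the inequalities 0 ≤ x_e ≤ 2 for every edge e ∈ E(G) and the equalities ∑_{e incident to u} x_e = 2 for every vertex u ∈ V(G). A point x ∈ ℝ^{E(G)} is a vertex (extreme point) of P2M(G) if and only if there exist a matching M ⊆ E(G) and a collection C of cycles of G of odd length that are pairwise vertex-disjoint and vertex-disjoint from M, such that every vertex of G is covered either by an edge of M or by a cycle in C, and x is given by x_e = 2 for e ∈ M, x_e = 1 for every edge e lying on a cycle of C, and x_e = 0 for all other edges. -/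
/-!
Let `F` be the set of fractional edges of `x`, those with `0 < x e < 2`. If `x` is extreme, no
nonzero `d` supported on `F` has zero sum at every vertex, since `x ± t • d` would stay in the
polytope for small `t`. So the incidence map is injective on `ℝ^F`, and `F` has at most as many
edges as vertices it touches. Every such vertex meets at least two fractional edges (the other
edges at it contribute `0` or `2` to its sum `2`), so all of them meet exactly two, and `F` is a
vertex-disjoint union of cycles. An even cycle would carry the perturbation `+1, -1, +1, …`,
so the cycles are odd, and on an odd cycle the relations `x e + x f = 2` at its vertices force
`x = 1`. The remaining edges have value `0` or `2`, and those with value `2` form a matching.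

Conversely, for such an `x`, every `y` in the polytope that vanishes wherever `x` does equals `2`
on the matching edges and, by the same odd-cycle argument, `1` on the cycles; so `y = x`, which
makes `x` extreme because the polytope lies in the nonnegative orthant.
-/

open Finset

/-- The perfect 2-matching polytope of a graph `G`, living in `ℝ^{E(G)}`:
`0 ≤ x_e ≤ 2` for every edge, and `∑_{e ∋ u} x_e = 2` for every vertex `u`. -/
def perfect2MatchingPolytope {V : Type} [Fintype V] [DecidableEq V]
    (G : SimpleGraph V) [Fintype G.edgeSet] : Set (G.edgeSet → ℝ) :=
  {x | (∀ e : G.edgeSet, 0 ≤ x e ∧ x e ≤ 2) ∧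
       (∀ u : V, ∑ e : G.edgeSet, (if u ∈ (e : Sym2 V) then x e else 0) = 2)}

theorem eq_zero_of_add_mem_of_sub_mem {E : Type*} [AddCommGroup E] [Module ℝ E] {A : Set E}
    {x v : E} (hx : x ∈ A.extremePoints ℝ) (hadd : x + v ∈ A) (hsub : x - v ∈ A) : v = 0 := by
  have hseg : x ∈ openSegment ℝ (x + v) (x - v) :=
    ⟨1 / 2, 1 / 2, by norm_num, by norm_num, by norm_num, by module⟩
  simpa using hx.2 hadd hsub hseg

theorem mem_extremePoints_of_forall_eq {ι : Type*} {A : Set (ι → ℝ)} {x : ι → ℝ}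
    (hA : ∀ y ∈ A, ∀ i, 0 ≤ y i) (hx : x ∈ A) (h : ∀ y ∈ A, (∀ i, x i = 0 → y i = 0) → y = x) :
    x ∈ A.extremePoints ℝ := by
  refine ⟨hx, fun y hy z hz ⟨a, b, ha, hb, _, hxyz⟩ ↦ h y hy fun i hi ↦ ?_⟩
  have : a * y i + b * z i = 0 := by simpa [← hi] using congrFun hxyz i
  nlinarith [hA y hy i, hA z hz i]

namespace SimpleGraph.Walk

variable {V : Type*} {G : SimpleGraph V} {u v : V} {c : G.Walk u u}

theorem IsCycle.exists_ne_mem_edges (hc : c.IsCycle) (hv : v ∈ c.support) :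
    ∃ e₁ ∈ c.edges, ∃ e₂ ∈ c.edges, e₁ ≠ e₂ ∧ v ∈ e₁ ∧ v ∈ e₂ := by
  obtain ⟨w₁, w₂, hne, hN⟩ := Set.ncard_eq_two.1 (hc.ncard_neighborSet_toSubgraph_eq_two hv)
  have h₁ : c.toSubgraph.Adj v w₁ := show w₁ ∈ c.toSubgraph.neighborSet v by simp [hN]
  have h₂ : c.toSubgraph.Adj v w₂ := show w₂ ∈ c.toSubgraph.neighborSet v by simp [hN]
  rw [adj_toSubgraph_iff_mem_edges] at h₁ h₂
  exact ⟨_, h₁, _, h₂, fun h ↦ hne (Sym2.congr_right.1 h), Sym2.mem_mk_left _ _,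
    Sym2.mem_mk_left _ _⟩

theorem IsCycle.eq_or_eq_of_mem_edges (hc : c.IsCycle) {e₁ e₂ e : Sym2 V} (h₁ : e₁ ∈ c.edges)
    (h₂ : e₂ ∈ c.edges) (he : e ∈ c.edges) (hne : e₁ ≠ e₂) (hv₁ : v ∈ e₁) (hv₂ : v ∈ e₂)
    (hv : v ∈ e) : e = e₁ ∨ e = e₂ := by
  obtain ⟨w₁, rfl⟩ := Sym2.mem_iff_exists.1 hv₁
  obtain ⟨w₂, rfl⟩ := Sym2.mem_iff_exists.1 hv₂
  obtain ⟨w, rfl⟩ := Sym2.mem_iff_exists.1 hv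
  have hN : {w₁, w₂} = c.toSubgraph.neighborSet v := by
    refine Set.eq_of_subset_of_ncard_le ?_ ?_ c.finite_neighborSet_toSubgraph
    · rintro _ (rfl | rfl) <;> simpa [adj_toSubgraph_iff_mem_edges]
    · rw [hc.ncard_neighborSet_toSubgraph_eq_two (c.fst_mem_support_of_mem_edges h₁),
        Set.ncard_pair (by rintro rfl; exact hne rfl)]
  have hw : w ∈ c.toSubgraph.neighborSet v := adj_toSubgraph_iff_mem_edges.2 he
  rw [← hN] at hw
  rcases hw with rfl | rfl <;> simp

theorem IsCycle.eq_zero_of_odd (hc : c.IsCycle) (hodd : Odd c.length) {g : Sym2 V → ℝ}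
    (hg : ∀ v e₁ e₂, e₁ ∈ c.edges → e₂ ∈ c.edges → e₁ ≠ e₂ → v ∈ e₁ → v ∈ e₂ →
      g e₁ + g e₂ = 0) :
    ∀ e ∈ c.edges, g e = 0 := by
  have hlen : c.edges.length = c.length := c.length_edges
  have h3 := hc.three_le_length
  have hnd := hc.edges_nodup
  have hstep : ∀ i (hi : i + 1 < c.edges.length), g c.edges[i] + g c.edges[i + 1] = 0 :=
    fun i hi ↦ hg (c.getVert (i + 1)) _ _ (List.getElem_mem _) (List.getElem_mem _)
      (by simp [hnd.getElem_inj_iff]) (by simp [getElem_edges]) (by simp [getElem_edges])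
  have halt : ∀ i (hi : i < c.edges.length), g c.edges[i] = (-1 : ℝ) ^ i * g c.edges[0] := by
    intro i
    induction i with
    | zero => simp
    | succ i ih => exact fun hi ↦ by linear_combination hstep i hi - ih (by omega)
  have hwrap : g c.edges[c.length - 1] + g c.edges[0] = 0 :=
    hg u _ _ (List.getElem_mem _) (List.getElem_mem _) (by simp [hnd.getElem_inj_iff]; omega)
      (by simp [getElem_edges, Nat.sub_add_cancel (by omega : 1 ≤ c.length)])
      (by simp [getElem_edges])
  have h0 : g c.edges[0] = 0 := by
    have := halt (c.length - 1) (by omega)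
    rw [(Nat.Odd.sub_odd hodd odd_one).neg_one_pow] at this
    linarith
  intro e he
  obtain ⟨i, hi, rfl⟩ := List.mem_iff_getElem.1 he
  rw [halt i hi, h0, mul_zero]

end SimpleGraph.Walk

namespace SimpleGraph

theorem isCycles_of_two_le_degree {V : Type*} [Fintype V] {H : SimpleGraph V}
    [DecidableRel H.Adj] (h2 : ∀ v, 0 < H.degree v → 2 ≤ H.degree v)
    (hcard : #H.edgeFinset ≤ #{v | 0 < H.degree v}) : H.IsCycles := by
  have hsum : ∑ v with 0 < H.degree v, H.degree v = ∑ v with 0 < H.degree v, 2 := by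
    refine le_antisymm ?_ (Finset.sum_le_sum fun v hv ↦ h2 v (mem_filter.1 hv).2)
    rw [Finset.sum_filter_of_ne fun v _ hv ↦ Nat.pos_of_ne_zero hv,
      sum_degrees_eq_twice_card_edges, sum_const, smul_eq_mul]
    omega
  have hdeg := (Finset.sum_eq_sum_iff_of_le fun v hv ↦ h2 v (mem_filter.1 hv).2).1 hsum.symm
  intro v ⟨w, hw⟩
  rw [← Nat.card_coe_set_eq, Nat.card_eq_fintype_card, card_neighborSet_eq_degree]
  exact (hdeg v (mem_filter.2 ⟨mem_univ v, (H.degree_pos_iff_exists_adj v).2 ⟨w, hw⟩⟩)).symm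

theorem IsCycles.exists_cycle_decomposition {V : Type*} [Fintype V]
    {H : SimpleGraph V} (hH : H.IsCycles) :
    ∃ (k : ℕ) (w : Fin k → V) (c : ∀ i, H.Walk (w i) (w i)), (∀ i, (c i).IsCycle) ∧
      (∀ i j, i ≠ j → ∀ v ∈ (c i).support, v ∉ (c j).support) ∧
      ∀ e, e ∈ H.edgeSet ↔ ∃ i, e ∈ (c i).edges := by
  classical
  let K := {C : H.ConnectedComponent // ∃ v ∈ C.supp, (H.neighborSet v).Nonempty}
  have hK (C : K) : ∃ v, ∃ p : H.Walk v v, p.IsCycle ∧ p.toSubgraph.verts = C.1.supp :=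
    let ⟨_, _, hv, hn⟩ := C
    ⟨_, hH.exists_cycle_toSubgraph_verts_eq_connectedComponentSupp hv hn⟩
  choose w c hc hverts using hK
  have hsupp (C : K) (v : V) : v ∈ (c C).support ↔ H.connectedComponentMk v = C.1 := by
    rw [← Walk.mem_verts_toSubgraph, hverts, ConnectedComponent.mem_supp_iff]
  let σ := (Fintype.equivFin K).symm
  refine ⟨Fintype.card K, fun i ↦ w (σ i), fun i ↦ c (σ i), fun i ↦ hc _, ?_, ?_⟩
  · intro i j hij v hvi hvj
    exact hij (σ.injective (Subtype.ext (((hsupp _ v).1 hvi).symm.trans ((hsupp _ v).1 hvj))))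
  · refine Sym2.ind fun u v ↦ ⟨fun huv ↦ ?_, fun ⟨i, hi⟩ ↦ (c (σ i)).adj_of_mem_edges hi⟩
    obtain ⟨i, hi⟩ := σ.surjective ⟨H.connectedComponentMk u, u, rfl, v, huv⟩
    refine ⟨i, ?_⟩
    have hu : u ∈ (c (σ i)).toSubgraph.verts :=
      (c _).mem_verts_toSubgraph.2 ((hsupp _ u).2 (by rw [hi]))
    rw [← Walk.adj_toSubgraph_iff_mem_edges, (hc _).adj_toSubgraph_iff_of_isCycles hH hu]
    exact huv

section Incidence

variable {V : Type} [DecidableEq V] {G : SimpleGraph V} [Fintype G.edgeSet]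

variable (G) in
def incidenceMap : (G.edgeSet → ℝ) →ₗ[ℝ] V → ℝ where
  toFun y u := ∑ e : G.edgeSet, if u ∈ (e : Sym2 V) then y e else 0
  map_add' y z := by
    ext u
    simp only [Pi.add_apply, ← Finset.sum_add_distrib]
    exact Finset.sum_congr rfl fun e _ ↦ by split_ifs <;> simp
  map_smul' r y := by
    ext u
    simp only [Pi.smul_apply, smul_eq_mul, RingHom.id_apply, Finset.mul_sum]
    exact Finset.sum_congr rfl fun e _ ↦ by split_ifs <;> simp

variable {y : G.edgeSet → ℝ} {u : V}

theorem incidenceMap_apply :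
    incidenceMap G y u = ∑ e : G.edgeSet, if u ∈ (e : Sym2 V) then y e else 0 := rfl

theorem incidenceMap_apply_eq_sum (s : Finset G.edgeSet) (hs : ∀ e ∈ s, u ∈ (e : Sym2 V))
    (hy : ∀ e : G.edgeSet, u ∈ (e : Sym2 V) → e ∉ s → y e = 0) :
    incidenceMap G y u = ∑ e ∈ s, y e := by
  rw [incidenceMap_apply, ← Finset.sum_subset (subset_univ s) fun e _ he ↦
    ite_eq_right_iff.2 fun hu ↦ hy e hu he]
  exact Finset.sum_congr rfl fun e he ↦ if_pos (hs e he)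

theorem sum_le_incidenceMap (hy : ∀ e, 0 ≤ y e) (s : Finset G.edgeSet)
    (hs : ∀ e ∈ s, u ∈ (e : Sym2 V)) : ∑ e ∈ s, y e ≤ incidenceMap G y u :=
  calc ∑ e ∈ s, y e = ∑ e ∈ s, if u ∈ (e : Sym2 V) then y e else 0 :=
        Finset.sum_congr rfl fun e he ↦ (if_pos (hs e he)).symm
    _ ≤ incidenceMap G y u :=
        Finset.sum_le_sum_of_subset_of_nonneg (subset_univ s) fun e _ _ ↦ by
          split_ifs <;> simp [hy e]

theorem incidenceMap_single (e : G.edgeSet) :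
    incidenceMap G (Pi.single e 1) u = if u ∈ (e : Sym2 V) then 1 else 0 := by
  by_cases hu : u ∈ (e : Sym2 V)
  · rw [incidenceMap_apply_eq_sum {e} (by simpa) fun f _ hf ↦ by simp_all, sum_singleton,
      Pi.single_eq_same, if_pos hu]
  · rw [incidenceMap_apply_eq_sum ∅ (by simp) fun f hf _ ↦ ?_, sum_empty, if_neg hu]
    exact Pi.single_eq_of_ne (by rintro rfl; exact hu hf) _

theorem incidenceMap_eq_add_of_isCycle {a v : V} {c : G.Walk a a} (hc : c.IsCycle)
    (hzero : ∀ e : G.edgeSet, v ∈ (e : Sym2 V) → (e : Sym2 V) ∉ c.edges → y e = 0)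
    {e₁ e₂ : G.edgeSet} (h₁ : (e₁ : Sym2 V) ∈ c.edges) (h₂ : (e₂ : Sym2 V) ∈ c.edges)
    (hne : e₁ ≠ e₂) (hv₁ : v ∈ (e₁ : Sym2 V)) (hv₂ : v ∈ (e₂ : Sym2 V)) :
    incidenceMap G y v = y e₁ + y e₂ := by
  refine (incidenceMap_apply_eq_sum {e₁, e₂} (by simp [hv₁, hv₂])
    fun e hv he ↦ hzero e hv fun hce ↦ ?_).trans (sum_pair hne)
  obtain h | h := hc.eq_or_eq_of_mem_edges h₁ h₂ hce (Subtype.coe_ne_coe.2 hne) hv₁ hv₂ hv <;>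
    simp [Subtype.ext h] at he

end Incidence

namespace Walk

variable {V : Type} [DecidableEq V] {G : SimpleGraph V}

def alternatingWeight : ∀ {u v : V}, G.Walk u v → G.edgeSet → ℝ
  | _, _, nil => 0
  | _, _, cons h p => Pi.single ⟨_, G.mem_edgeSet.2 h⟩ 1 - p.alternatingWeight

theorem alternatingWeight_eq_zero {u v : V} (p : G.Walk u v) {e : G.edgeSet}
    (he : (e : Sym2 V) ∉ p.edges) : p.alternatingWeight e = 0 := by
  induction p with
  | nil => rfl
  | cons h p ih =>
    rw [edges_cons, List.mem_cons, not_or] at he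
    rw [alternatingWeight, Pi.sub_apply, ih he.2, sub_zero]
    exact Pi.single_eq_of_ne (fun h ↦ he.1 (congrArg Subtype.val h)) _

theorem incidenceMap_alternatingWeight [Fintype G.edgeSet] {u v : V} (p : G.Walk u v)
    (w : V) :
    incidenceMap G p.alternatingWeight w =
      (if w = u then 1 else 0) - (-1) ^ p.length * (if w = v then 1 else 0) := by
  induction p with
  | nil => simp [alternatingWeight]
  | @cons a b c h p ih =>
    rw [alternatingWeight, map_sub, Pi.sub_apply, incidenceMap_single, ih, length_cons,
      pow_succ]
    have hab := h.ne
    simp only [Sym2.mem_iff]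
    split_ifs <;> simp_all

end Walk

end SimpleGraph

namespace Perfect2MatchingPolytope

open SimpleGraph Filter Topology

variable {V : Type} {G : SimpleGraph V} {x y : G.edgeSet → ℝ}

variable (x) in
def fractionalGraph : SimpleGraph V :=
  fromEdgeSet ((↑) '' {e : G.edgeSet | x e ∈ Set.Ioo 0 2})

theorem coe_mem_edgeSet_fractionalGraph {e : G.edgeSet} :
    (e : Sym2 V) ∈ (fractionalGraph x).edgeSet ↔ x e ∈ Set.Ioo 0 2 := by
  simp [fractionalGraph, edgeSet_fromEdgeSet, G.not_isDiag_of_mem_edgeSet e.2]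

theorem fractionalGraph_le : fractionalGraph x ≤ G := fun u v huv ↦ by
  obtain ⟨⟨e, -, he⟩, -⟩ := (fromEdgeSet_adj _).1 huv
  exact G.mem_edgeSet.1 (he ▸ e.2)

structure IsMatchingOddCycleCover (x : G.edgeSet → ℝ) (M : Set (Sym2 V)) {k : ℕ} {w : Fin k → V}
    (c : ∀ i, G.Walk (w i) (w i)) : Prop where
  subset_edgeSet : M ⊆ G.edgeSet
  matching : ∀ e ∈ M, ∀ f ∈ M, e ≠ f → ∀ v : V, v ∈ e → v ∉ f
  isCycle : ∀ i, (c i).IsCycle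
  odd_length : ∀ i, Odd (c i).length
  disjoint_support : ∀ i j, i ≠ j → ∀ v ∈ (c i).support, v ∉ (c j).support
  disjoint_matching : ∀ i, ∀ v ∈ (c i).support, ∀ e ∈ M, v ∉ e
  cover : ∀ v, (∃ e ∈ M, v ∈ e) ∨ ∃ i, v ∈ (c i).support
  eq_two : ∀ e : G.edgeSet, (e : Sym2 V) ∈ M → x e = 2
  eq_one : ∀ e : G.edgeSet, (∃ i, (e : Sym2 V) ∈ (c i).edges) → x e = 1
  eq_zero : ∀ e : G.edgeSet, (e : Sym2 V) ∉ M → (¬∃ i, (e : Sym2 V) ∈ (c i).edges) → x e = 0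

variable {M : Set (Sym2 V)} {k : ℕ} {w : Fin k → V} {c : ∀ i, G.Walk (w i) (w i)}

theorem IsMatchingOddCycleCover.eq_zero_of_mem_support (h : IsMatchingOddCycleCover x M c)
    {i : Fin k} {v : V} (hv : v ∈ (c i).support) {e : G.edgeSet} (hve : v ∈ (e : Sym2 V))
    (he : (e : Sym2 V) ∉ (c i).edges) : x e = 0 := by
  refine h.eq_zero e (h.disjoint_matching i v hv _ · hve) ?_
  rintro ⟨j, hj⟩
  obtain rfl : j = i :=
    by_contra fun hji ↦
      h.disjoint_support i j (Ne.symm hji) v hv ((c j).mem_support_of_mem_edges hj hve)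
  exact he hj

theorem IsMatchingOddCycleCover.eq_zero_of_mem_matching (h : IsMatchingOddCycleCover x M c)
    {e₀ : G.edgeSet} (he₀ : (e₀ : Sym2 V) ∈ M) {u : V} (hu : u ∈ (e₀ : Sym2 V)) {e : G.edgeSet}
    (hue : u ∈ (e : Sym2 V)) (hne : e ≠ e₀) : x e = 0 := by
  refine h.eq_zero e (fun hM ↦ h.matching _ hM _ he₀ (Subtype.coe_ne_coe.2 hne) u hue hu) ?_
  rintro ⟨i, hi⟩
  exact h.disjoint_matching i u ((c i).mem_support_of_mem_edges hi hue) _ he₀ hu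

variable [DecidableEq V] [Fintype G.edgeSet]

theorem IsMatchingOddCycleCover.incidenceMap_eq_of_mem_matching
    (h : IsMatchingOddCycleCover x M c) (hy : ∀ e, x e = 0 → y e = 0) {e₀ : G.edgeSet}
    (he₀ : (e₀ : Sym2 V) ∈ M) {u : V} (hu : u ∈ (e₀ : Sym2 V)) : incidenceMap G y u = y e₀ := by
  rw [incidenceMap_apply_eq_sum {e₀} (by simpa) fun e hue hne ↦
    hy e (h.eq_zero_of_mem_matching he₀ hu hue (by simpa using hne)), sum_singleton]

variable [Fintype V]

theorem _root_.mem_perfect2MatchingPolytope :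
    x ∈ perfect2MatchingPolytope G ↔ (∀ e, x e ∈ Set.Icc 0 2) ∧ ∀ u, incidenceMap G x u = 2 :=
  Iff.rfl

theorem eq_zero_of_eq_two (hx : x ∈ perfect2MatchingPolytope G) {u : V} {e f : G.edgeSet}
    (hne : e ≠ f) (he : u ∈ (e : Sym2 V)) (hf : u ∈ (f : Sym2 V)) (h2 : x f = 2) : x e = 0 := by
  obtain ⟨hbox, hsum⟩ := mem_perfect2MatchingPolytope.1 hx
  have := sum_le_incidenceMap (fun e ↦ (hbox e).1) {e, f} (u := u) (by simp [he, hf])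
  rw [sum_pair hne, hsum, h2] at this
  exact le_antisymm (by linarith) (hbox e).1

theorem eq_zero_or_eq_two (hx : x ∈ perfect2MatchingPolytope G) {e : G.edgeSet}
    (he : x e ∉ Set.Ioo 0 2) : x e = 0 ∨ x e = 2 := by
  simpa using (Set.Icc_sdiff_Ioo_same zero_le_two).subset ⟨hx.1 e, he⟩

theorem exists_pos (hx : x ∈ perfect2MatchingPolytope G) (u : V) :
    ∃ e : G.edgeSet, u ∈ (e : Sym2 V) ∧ 0 < x e := by
  by_contra! h
  have := (mem_perfect2MatchingPolytope.1 hx).2 u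
  rw [incidenceMap_apply_eq_sum ∅ (by simp) fun e (he : u ∈ (e : Sym2 V)) _ ↦
    (h e he).antisymm (hx.1 e).1, sum_empty] at this
  norm_num at this

theorem exists_ne_mem_Ioo (hx : x ∈ perfect2MatchingPolytope G) {u : V} {e : G.edgeSet}
    (hu : u ∈ (e : Sym2 V)) (he : x e ∈ Set.Ioo 0 2) :
    ∃ f ≠ e, u ∈ (f : Sym2 V) ∧ x f ∈ Set.Ioo 0 2 := by
  by_contra! h
  have hzero (f : G.edgeSet) (hf : u ∈ (f : Sym2 V)) (hfe : f ∉ ({e} : Finset G.edgeSet)) :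
      x f = 0 := by
    rw [mem_singleton] at hfe
    exact (eq_zero_or_eq_two hx (h f hfe hf)).resolve_right fun h2 ↦
      he.1.ne' (eq_zero_of_eq_two hx (Ne.symm hfe) hu hf h2)
  have := (mem_perfect2MatchingPolytope.1 hx).2 u
  rw [incidenceMap_apply_eq_sum {e} (by simpa) hzero, sum_singleton] at this
  exact he.2.ne this

theorem eq_zero_of_incidenceMap_eq_zero (hx : x ∈ (perfect2MatchingPolytope G).extremePoints ℝ)
    {d : G.edgeSet → ℝ} (hd : ∀ e, d e ≠ 0 → x e ∈ Set.Ioo 0 2) (hinc : incidenceMap G d = 0) :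
    d = 0 := by
  obtain ⟨hbox, hsum⟩ := mem_perfect2MatchingPolytope.1 hx.1
  have hmem : ∀ᶠ t in 𝓝 (0 : ℝ), x + t • d ∈ perfect2MatchingPolytope G := by
    have hbox' : ∀ e, ∀ᶠ t in 𝓝 (0 : ℝ), x e + t * d e ∈ Set.Icc 0 2 := fun e ↦ by
      by_cases h : d e = 0
      · simp [h, hbox e]
      · have : Tendsto (fun t : ℝ ↦ x e + t * d e) (𝓝 0) (𝓝 (x e)) :=
          (by fun_prop : Continuous fun t : ℝ ↦ x e + t * d e).tendsto' 0 (x e) (by simp)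
        exact this.eventually (Icc_mem_nhds (hd e h).1 (hd e h).2)
    filter_upwards [eventually_all.2 hbox'] with t ht
    refine mem_perfect2MatchingPolytope.2 ⟨ht, fun u ↦ ?_⟩
    rw [map_add, map_smul, hinc, smul_zero, add_zero, hsum]
  have hmem' : ∀ᶠ t in 𝓝[≠] (0 : ℝ), x + t • d ∈ perfect2MatchingPolytope G ∧
      x - t • d ∈ perfect2MatchingPolytope G ∧ t ≠ 0 := by
    refine ((hmem.and ?_).filter_mono nhdsWithin_le_nhds).and self_mem_nhdsWithin |>.mono
      fun t ⟨⟨h₁, h₂⟩, h₃⟩ ↦ ⟨h₁, h₂, h₃⟩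
    simpa [sub_eq_add_neg] using (continuous_neg.tendsto' (0 : ℝ) 0 neg_zero).eventually hmem
  obtain ⟨t, hp, hm, ht⟩ := hmem'.exists
  exact (smul_eq_zero.1 (eq_zero_of_add_mem_of_sub_mem hx hp hm)).resolve_left ht

theorem two_le_degree_fractionalGraph [DecidableRel (fractionalGraph x).Adj]
    (hx : x ∈ perfect2MatchingPolytope G) {u : V} (hu : 0 < (fractionalGraph x).degree u) :
    2 ≤ (fractionalGraph x).degree u := by
  obtain ⟨v, huv⟩ := (degree_pos_iff_exists_adj _ _).1 hu
  let e : G.edgeSet := ⟨s(u, v), fractionalGraph_le huv⟩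
  obtain ⟨f, hfe, huf, hf⟩ :=
    exists_ne_mem_Ioo hx (Sym2.mem_mk_left u v) (coe_mem_edgeSet_fractionalGraph.1 huv : x e ∈ _)
  obtain ⟨w, hw⟩ := Sym2.mem_iff_exists.1 huf
  have huw : (fractionalGraph x).Adj u w := by
    rw [← mem_edgeSet, ← hw]
    exact coe_mem_edgeSet_fractionalGraph.2 hf
  rw [← card_neighborFinset_eq_degree]
  refine Finset.one_lt_card.2 ⟨v, by simpa, w, by simpa, ?_⟩
  rintro rfl
  exact hfe (Subtype.ext hw)

theorem card_edgeFinset_fractionalGraph_le [DecidableRel (fractionalGraph x).Adj]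
    (hx : x ∈ (perfect2MatchingPolytope G).extremePoints ℝ) :
    #(fractionalGraph x).edgeFinset ≤ #{v | 0 < (fractionalGraph x).degree v} := by
  let ι : (fractionalGraph x).edgeSet → G.edgeSet :=
    Set.inclusion (edgeSet_mono fractionalGraph_le)
  let ψ : ((fractionalGraph x).edgeSet → ℝ) →ₗ[ℝ] {v // 0 < (fractionalGraph x).degree v} → ℝ :=
    LinearMap.funLeft ℝ ℝ Subtype.val ∘ₗ incidenceMap G ∘ₗ
      Function.ExtendByZero.linearMap ℝ ι
  have hψ : Function.Injective ψ := by
    rw [← LinearMap.ker_eq_bot, LinearMap.ker_eq_bot']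
    intro φ hφ
    set d := Function.extend ι φ 0
    have hsupp (e : G.edgeSet) (he : d e ≠ 0) : (e : Sym2 V) ∈ (fractionalGraph x).edgeSet := by
      by_contra h
      exact he (Function.extend_apply' _ _ _ fun ⟨a, ha⟩ ↦ h (ha ▸ a.2))
    have hinc : incidenceMap G d = 0 := by
      funext u
      by_cases hu : 0 < (fractionalGraph x).degree u
      · exact congrFun hφ ⟨u, hu⟩
      refine (incidenceMap_apply_eq_sum ∅ (by simp) fun e hue _ ↦ ?_).trans sum_empty
      by_contra he
      obtain ⟨w, hw⟩ := Sym2.mem_iff_exists.1 hue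
      have huw : (fractionalGraph x).Adj u w := by rw [← mem_edgeSet, ← hw]; exact hsupp e he
      exact hu ((degree_pos_iff_exists_adj _ _).2 ⟨w, huw⟩)
    have hd := eq_zero_of_incidenceMap_eq_zero hx
      (fun e he ↦ coe_mem_edgeSet_fractionalGraph.1 (hsupp e he)) hinc
    funext e
    exact ((Set.inclusion_injective _).extend_apply φ 0 e).symm.trans (congrFun hd (ι e))
  simpa [Module.finrank_fintype_fun_eq_card, edgeFinset_card, Fintype.card_subtype] using
    LinearMap.finrank_le_finrank_of_injective hψ

theorem isCycles_fractionalGraph (hx : x ∈ (perfect2MatchingPolytope G).extremePoints ℝ) :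
    (fractionalGraph x).IsCycles := by
  classical
  exact isCycles_of_two_le_degree (fun _ ↦ two_le_degree_fractionalGraph hx.1)
    (card_edgeFinset_fractionalGraph_le hx)

theorem exists_fractional_cycle_decomposition
    (hx : x ∈ (perfect2MatchingPolytope G).extremePoints ℝ) :
    ∃ (k : ℕ) (w : Fin k → V) (c : ∀ i, G.Walk (w i) (w i)), (∀ i, (c i).IsCycle) ∧
      (∀ i j, i ≠ j → ∀ v ∈ (c i).support, v ∉ (c j).support) ∧
      ∀ e : G.edgeSet, x e ∈ Set.Ioo 0 2 ↔ ∃ i, (e : Sym2 V) ∈ (c i).edges := by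
  obtain ⟨k, w, c, hc, hdisj, hedges⟩ := (isCycles_fractionalGraph hx).exists_cycle_decomposition
  refine ⟨k, w, fun i ↦ (c i).mapLe fractionalGraph_le, fun i ↦ (hc i).mapLe _, ?_, fun e ↦ ?_⟩
  · simpa only [Walk.support_mapLe_eq_support] using hdisj
  · simpa only [Walk.edges_mapLe_eq_edges, coe_mem_edgeSet_fractionalGraph] using hedges e

theorem odd_length_of_isCycle (hx : x ∈ (perfect2MatchingPolytope G).extremePoints ℝ) {a : V}
    {c : G.Walk a a} (hc : c.IsCycle)
    (hfrac : ∀ e : G.edgeSet, (e : Sym2 V) ∈ c.edges → x e ∈ Set.Ioo 0 2) : Odd c.length := by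
  by_contra hodd
  have hzero := eq_zero_of_incidenceMap_eq_zero hx (d := c.alternatingWeight)
    (fun e he ↦ hfrac e (by_contra (he ∘ c.alternatingWeight_eq_zero)))
    (funext fun w ↦ by simp [Walk.incidenceMap_alternatingWeight,
      (Nat.not_odd_iff_even.1 hodd).neg_one_pow])
  obtain ⟨b, h, p, rfl⟩ := Walk.not_nil_iff.1 hc.not_nil
  have := congrFun hzero ⟨_, G.mem_edgeSet.2 h⟩
  rw [Walk.alternatingWeight, Pi.sub_apply, Pi.single_eq_same,
    p.alternatingWeight_eq_zero ((Walk.cons_isCycle_iff p h).1 hc).2] at this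
  norm_num at this

theorem eq_one_of_isCycle_of_odd (hy : y ∈ perfect2MatchingPolytope G) {a : V}
    {c : G.Walk a a} (hc : c.IsCycle) (hodd : Odd c.length)
    (hzero : ∀ v ∈ c.support, ∀ e : G.edgeSet, v ∈ (e : Sym2 V) → (e : Sym2 V) ∉ c.edges →
      y e = 0) :
    ∀ e : G.edgeSet, (e : Sym2 V) ∈ c.edges → y e = 1 := by
  classical
  have key := hc.eq_zero_of_odd hodd
    (g := fun z ↦ if h : z ∈ G.edgeSet then y ⟨z, h⟩ - 1 else 0)
    fun v e₁ e₂ h₁ h₂ hne hv₁ hv₂ ↦ by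
      lift e₁ to G.edgeSet using c.edges_subset_edgeSet h₁
      lift e₂ to G.edgeSet using c.edges_subset_edgeSet h₂
      have := incidenceMap_eq_add_of_isCycle hc (hzero v (c.mem_support_of_mem_edges h₁ hv₁))
        h₁ h₂ (fun h ↦ hne (congrArg _ h)) hv₁ hv₂
      rw [(mem_perfect2MatchingPolytope.1 hy).2 v] at this
      simp only [Subtype.coe_prop, dite_true]
      linarith
  intro e he
  simpa [sub_eq_zero] using key e he

theorem eq_zero_of_notMem_edges (hx : x ∈ perfect2MatchingPolytope G) {a v : V}
    {c : G.Walk a a} (hc : c.IsCycle)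
    (hfrac : ∀ e : G.edgeSet, (e : Sym2 V) ∈ c.edges → x e ∈ Set.Ioo 0 2) (hv : v ∈ c.support)
    (hclosed : ∀ e : G.edgeSet, v ∈ (e : Sym2 V) → x e ∈ Set.Ioo 0 2 → (e : Sym2 V) ∈ c.edges)
    {e : G.edgeSet} (hve : v ∈ (e : Sym2 V)) (he : (e : Sym2 V) ∉ c.edges) : x e = 0 := by
  refine (eq_zero_or_eq_two hx (he ∘ hclosed e hve)).resolve_right fun h2 ↦ ?_
  obtain ⟨f, hf, -, -, -, hvf, -⟩ := hc.exists_ne_mem_edges hv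
  lift f to G.edgeSet using c.edges_subset_edgeSet hf
  exact (hfrac f hf).1.ne' (eq_zero_of_eq_two hx (by rintro rfl; exact he hf) hvf hve h2)

theorem exists_isMatchingOddCycleCover
    (hx : x ∈ (perfect2MatchingPolytope G).extremePoints ℝ) :
    ∃ (M : Set (Sym2 V)) (k : ℕ) (w : Fin k → V) (c : ∀ i, G.Walk (w i) (w i)),
      IsMatchingOddCycleCover x M c := by
  have hP := hx.1
  obtain ⟨k, w, c, hc, hdisj, hfrac⟩ := exists_fractional_cycle_decomposition hx
  have hcfrac (i) (e : G.edgeSet) (he : (e : Sym2 V) ∈ (c i).edges) : x e ∈ Set.Ioo 0 2 :=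
    (hfrac e).2 ⟨i, he⟩
  have hclosed (i) (v) (hv : v ∈ (c i).support) (e : G.edgeSet) (hve : v ∈ (e : Sym2 V))
      (he : x e ∈ Set.Ioo 0 2) : (e : Sym2 V) ∈ (c i).edges := by
    obtain ⟨j, hj⟩ := (hfrac e).1 he
    obtain rfl : j = i :=
      by_contra fun hji ↦ hdisj j i hji v ((c j).mem_support_of_mem_edges hj hve) hv
    exact hj
  have hzero (i) (v) (hv : v ∈ (c i).support) (e : G.edgeSet) (hve : v ∈ (e : Sym2 V))
      (he : (e : Sym2 V) ∉ (c i).edges) : x e = 0 :=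
    eq_zero_of_notMem_edges hP (hc i) (hcfrac i) hv (hclosed i v hv) hve he
  have hodd (i) : Odd (c i).length := odd_length_of_isCycle hx (hc i) (hcfrac i)
  refine ⟨(↑) '' {e | x e = 2}, k, w, c, ⟨Subtype.coe_image_subset _ _, ?_, hc, hodd, hdisj,
    ?_, fun v ↦ ?_, ?_, fun e ⟨i, hi⟩ ↦ eq_one_of_isCycle_of_odd hP (hc i) (hodd i) (hzero i) e hi,
    fun e hM hC ↦ ?_⟩⟩
  · rintro _ ⟨e, he, rfl⟩ _ ⟨f, hf, rfl⟩ hne v hve hvf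
    have h0 := eq_zero_of_eq_two hP (fun h ↦ hne (congrArg _ h)) hve hvf hf
    exact two_ne_zero ((he : x e = 2).symm.trans h0)
  · rintro i v hv _ ⟨e, he, rfl⟩ hve
    have h0 := hzero i v hv e hve fun hi ↦ (hcfrac i e hi).2.ne he
    exact two_ne_zero ((he : x e = 2).symm.trans h0)
  · obtain ⟨e, hve, hpos⟩ := exists_pos hP v
    by_cases he : x e ∈ Set.Ioo 0 2
    · obtain ⟨i, hi⟩ := (hfrac e).1 he
      exact .inr ⟨i, (c i).mem_support_of_mem_edges hi hve⟩
    · exact .inl ⟨e, ⟨e, (eq_zero_or_eq_two hP he).resolve_left hpos.ne', rfl⟩, hve⟩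
  · rintro e ⟨f, hf, hfe⟩
    rwa [← Subtype.ext hfe]
  · by_cases he : x e ∈ Set.Ioo 0 2
    · exact absurd ((hfrac e).1 he) hC
    · exact (eq_zero_or_eq_two hP he).resolve_right fun h2 ↦ hM ⟨e, h2, rfl⟩

theorem IsMatchingOddCycleCover.mem_perfect2MatchingPolytope
    (h : IsMatchingOddCycleCover x M c) : x ∈ perfect2MatchingPolytope G := by
  refine _root_.mem_perfect2MatchingPolytope.2 ⟨fun e ↦ ?_, fun u ↦ ?_⟩
  · by_cases hM : (e : Sym2 V) ∈ M
    · simp [h.eq_two e hM]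
    by_cases hC : ∃ i, (e : Sym2 V) ∈ (c i).edges
    · simp [h.eq_one e hC]
    · simp [h.eq_zero e hM hC]
  rcases h.cover u with ⟨e₀, he₀, hu⟩ | ⟨i, hu⟩
  · lift e₀ to G.edgeSet using h.subset_edgeSet he₀
    rw [h.incidenceMap_eq_of_mem_matching (fun _ ↦ id) he₀ hu, h.eq_two e₀ he₀]
  · obtain ⟨e₁, h₁, e₂, h₂, hne, hu₁, hu₂⟩ := (h.isCycle i).exists_ne_mem_edges hu
    lift e₁ to G.edgeSet using (c i).edges_subset_edgeSet h₁
    lift e₂ to G.edgeSet using (c i).edges_subset_edgeSet h₂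
    rw [incidenceMap_eq_add_of_isCycle (h.isCycle i) (fun e ↦ h.eq_zero_of_mem_support hu)
      h₁ h₂ (fun h ↦ hne (congrArg _ h)) hu₁ hu₂, h.eq_one e₁ ⟨i, h₁⟩, h.eq_one e₂ ⟨i, h₂⟩]
    norm_num

theorem IsMatchingOddCycleCover.eq_of_forall_eq_zero (h : IsMatchingOddCycleCover x M c)
    (hy : y ∈ perfect2MatchingPolytope G) (hsupp : ∀ e, x e = 0 → y e = 0) : y = x := by
  funext e
  by_cases hM : (e : Sym2 V) ∈ M
  · obtain ⟨u, hu⟩ : ∃ u, u ∈ (e : Sym2 V) := ⟨_, Sym2.out_fst_mem _⟩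
    rw [← h.incidenceMap_eq_of_mem_matching hsupp hM hu,
      (_root_.mem_perfect2MatchingPolytope.1 hy).2, h.eq_two e hM]
  by_cases hC : ∃ i, (e : Sym2 V) ∈ (c i).edges
  · obtain ⟨i, hi⟩ := hC
    rw [h.eq_one e ⟨i, hi⟩, eq_one_of_isCycle_of_odd hy (h.isCycle i) (h.odd_length i)
      (fun v hv e hve he ↦ hsupp e (h.eq_zero_of_mem_support hv hve he)) e hi]
  · rw [h.eq_zero e hM hC, hsupp e (h.eq_zero e hM hC)]

theorem IsMatchingOddCycleCover.mem_extremePoints (h : IsMatchingOddCycleCover x M c) :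
    x ∈ (perfect2MatchingPolytope G).extremePoints ℝ :=
  mem_extremePoints_of_forall_eq (fun _ hy e ↦ (hy.1 e).1) h.mem_perfect2MatchingPolytope
    fun _ hy ↦ h.eq_of_forall_eq_zero hy

end Perfect2MatchingPolytope

theorem perfect2MatchingPolytope_extremePoints_general
    {V : Type} [Fintype V] [DecidableEq V] (G : SimpleGraph V) [Fintype G.edgeSet]
    (x : G.edgeSet → ℝ) :
    x ∈ Set.extremePoints ℝ (perfect2MatchingPolytope G) ↔
      ∃ (M : Set (Sym2 V)) (k : ℕ) (w : Fin k → V)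
        (c : ∀ i : Fin k, G.Walk (w i) (w i)),
        -- `M` is a set of edges of `G`
        M ⊆ G.edgeSet ∧
        -- `M` is a matching: distinct edges of `M` share no vertex
        (∀ e ∈ M, ∀ f ∈ M, e ≠ f → ∀ v : V, v ∈ e → v ∉ f) ∧
        -- the `c i` are odd cycles
        (∀ i, (c i).IsCycle ∧ Odd (c i).length) ∧
        -- the cycles are pairwise vertex-disjoint
        (∀ i j, i ≠ j → ∀ v : V, v ∈ (c i).support → v ∉ (c j).support) ∧
        -- the cycles are vertex-disjoint from the matching
        (∀ i, ∀ v ∈ (c i).support, ∀ e ∈ M, v ∉ e) ∧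
        -- together they cover every vertex of `G`
        (∀ v : V, (∃ e ∈ M, v ∈ e) ∨ (∃ i, v ∈ (c i).support)) ∧
        -- and `x` is the corresponding point
        (∀ e : G.edgeSet,
          ((e : Sym2 V) ∈ M → x e = 2) ∧
          ((∃ i, (e : Sym2 V) ∈ (c i).edges) → x e = 1) ∧
          ((e : Sym2 V) ∉ M → ¬ (∃ i, (e : Sym2 V) ∈ (c i).edges) → x e = 0)) := by
  constructor
  · intro hx
    obtain ⟨M, k, w, c, h⟩ := Perfect2MatchingPolytope.exists_isMatchingOddCycleCover hx
    exact ⟨M, k, w, c, h.subset_edgeSet, h.matching, fun i ↦ ⟨h.isCycle i, h.odd_length i⟩,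
      h.disjoint_support, h.disjoint_matching, h.cover,
      fun e ↦ ⟨h.eq_two e, h.eq_one e, h.eq_zero e⟩⟩
  · rintro ⟨M, k, w, c, hMG, hmatch, hc, hdisj, hMc, hcover, hval⟩
    exact Perfect2MatchingPolytope.IsMatchingOddCycleCover.mem_extremePoints
      ⟨hMG, hmatch, fun i ↦ (hc i).1, fun i ↦ (hc i).2, hdisj, hMc, hcover,
        fun e ↦ (hval e).1, fun e ↦ (hval e).2.1, fun e ↦ (hval e).2.2⟩

theorem perfect2MatchingPolytope_extremePoints
    {V : Type} [Fintype V] [DecidableEq V] (G : SimpleGraph V) [Fintype G.edgeSet]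
    (hcov : ∀ v : V, ∃ u : V, G.Adj v u)
    (x : G.edgeSet → ℝ) :
    x ∈ Set.extremePoints ℝ (perfect2MatchingPolytope G) ↔
      ∃ (M : Set (Sym2 V)) (k : ℕ) (w : Fin k → V)
        (c : ∀ i : Fin k, G.Walk (w i) (w i)),
        -- `M` is a set of edges of `G`
        M ⊆ G.edgeSet ∧
        -- `M` is a matching: distinct edges of `M` share no vertex
        (∀ e ∈ M, ∀ f ∈ M, e ≠ f → ∀ v : V, v ∈ e → v ∉ f) ∧
        -- the `c i` are odd cycles
        (∀ i, (c i).IsCycle ∧ Odd (c i).length) ∧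
        -- the cycles are pairwise vertex-disjoint
        (∀ i j, i ≠ j → ∀ v : V, v ∈ (c i).support → v ∉ (c j).support) ∧
        -- the cycles are vertex-disjoint from the matching
        (∀ i, ∀ v ∈ (c i).support, ∀ e ∈ M, v ∉ e) ∧
        -- together they cover every vertex of `G`
        (∀ v : V, (∃ e ∈ M, v ∈ e) ∨ (∃ i, v ∈ (c i).support)) ∧
        -- and `x` is the corresponding point
        (∀ e : G.edgeSet,
          ((e : Sym2 V) ∈ M → x e = 2) ∧
          ((∃ i, (e : Sym2 V) ∈ (c i).edges) → x e = 1) ∧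
          ((e : Sym2 V) ∉ M → ¬ (∃ i, (e : Sym2 V) ∈ (c i).edges) → x e = 0)) :=
  perfect2MatchingPolytope_extremePoints_general G x
end

section
/- Let G be a finite graph in which every vertex is incident to at least one edge, and let P2M(G) ⊆ ℝ^{E(G)} be its perfect 2-matching polytope. Every vertex (extreme point) x of P2M(G) has all coordinates in {0, 1, 2}; that is, P2M(G) is a half-integral polytope (after scaling by 1/2). -/
/-!
Let `F` be the set of edges on which an extreme point `x` is fractional. At a vertex met by `F`
the other edges carry `0` or `2`, so the edges of `F` there sum to exactly `2`, and there are
at least two of them. Extremality says that no nonzero direction supported on `F` is killed by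
the incidence map, so the incidence map `ℝ^F → ℝ^S` (with `S` the vertices met by `F`) is
injective and `#F ≤ #S`. Handshaking, `∑_{v ∈ S} deg_F v = 2 #F`, then forces every vertex of `S`
to meet exactly two edges of `F`; but then `x - 1` on `F` is such a direction, so `x = 1` on `F`.
-/

open Finset

open Filter Topology

theorem eq_zero_of_mem_extremePoints_of_eventually_add_smul_mem {E : Type*} [AddCommGroup E]
    [Module ℝ E] {A : Set E} {x d : E} (hx : x ∈ A.extremePoints ℝ)
    (hd : ∀ᶠ t in 𝓝 (0 : ℝ), x + t • d ∈ A) : d = 0 := by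
  have hneg : ∀ᶠ t in 𝓝 (0 : ℝ), x + (-t) • d ∈ A :=
    (continuous_neg.tendsto' (0 : ℝ) 0 neg_zero).eventually hd
  obtain ⟨t, ⟨hplus, hminus⟩, ht⟩ :=
    ((hd.and hneg).filter_mono nhdsWithin_le_nhds |>.and self_mem_nhdsWithin).exists
      (f := 𝓝[≠] (0 : ℝ))
  rw [neg_smul, ← sub_eq_add_neg] at hminus
  have htd : x + t • d = x := hx.2 hplus hminus (mem_openSegment_add_sub x (t • d))
  exact (smul_eq_zero.1 (add_eq_left.1 htd)).resolve_left ht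

namespace SimpleGraph

variable {V : Type*} [DecidableEq V]

theorem sum_card_filter_mem_eq_two_mul_card [Fintype V] {G : SimpleGraph V}
    (F : Finset G.edgeSet) :
    ∑ u, #{e ∈ F | u ∈ e.1} = 2 * #F := by
  have hcard : ∀ e : G.edgeSet, #{u | u ∈ e.1} = 2 := by
    rintro ⟨e, he⟩
    rw [← Sym2.card_toFinset_of_not_isDiag e (G.not_isDiag_of_mem_edgeSet he)]
    congr 1
    ext u
    simp
  calc ∑ u, #{e ∈ F | u ∈ e.1}
      = ∑ e ∈ F, #{u | u ∈ e.1} :=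
        sum_card_bipartiteAbove_eq_sum_card_bipartiteBelow (fun u (e : G.edgeSet) => u ∈ e.1)
    _ = 2 * #F := by rw [sum_congr rfl fun e _ => hcard e, sum_const, smul_eq_mul, mul_comm]

variable (G : SimpleGraph V) [Fintype G.edgeSet]

def edgeIncidenceMap (R : Type*) [Semiring R] : (G.edgeSet → R) →ₗ[R] (V → R) where
  toFun x u := ∑ e : G.edgeSet, if u ∈ (e : Sym2 V) then x e else 0
  map_add' x y := by
    ext u
    simp only [Pi.add_apply, ← sum_add_distrib, ite_add_zero]
  map_smul' c x := by
    ext u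
    simp only [Pi.smul_apply, smul_eq_mul, mul_sum, mul_ite, mul_zero, RingHom.id_apply]

variable {G}

theorem edgeIncidenceMap_apply_of_forall_notMem_eq_zero {R : Type*} [Semiring R]
    {F : Finset G.edgeSet} {d : G.edgeSet → R} (hd : ∀ e ∉ F, d e = 0) (u : V) :
    G.edgeIncidenceMap R d u = ∑ e ∈ F with u ∈ e.1, d e := by
  rw [sum_filter]
  exact (sum_subset (subset_univ F) fun e _ he => by simp [hd e he]).symm

end SimpleGraph

section Perfect2Matching

open SimpleGraph

variable {V : Type} {G : SimpleGraph V} [Fintype G.edgeSet]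

noncomputable def fractionalEdges (x : G.edgeSet → ℝ) : Finset G.edgeSet := {e | x e ∈ Set.Ioo 0 2}

variable {x : G.edgeSet → ℝ}

theorem mem_fractionalEdges {e : G.edgeSet} :
    e ∈ fractionalEdges x ↔ x e ∈ Set.Ioo 0 2 := by
  simp [fractionalEdges]

variable [Fintype V] [DecidableEq V]

theorem mem_perfect2MatchingPolytope_iff :
    x ∈ perfect2MatchingPolytope G ↔
      (∀ e, x e ∈ Set.Icc 0 2) ∧ G.edgeIncidenceMap ℝ x = 2 := by
  simp only [perfect2MatchingPolytope, Set.mem_Icc, funext_iff]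
  rfl

theorem eq_zero_or_eq_two_of_notMem_fractionalEdges
    (hx : x ∈ perfect2MatchingPolytope G) {e : G.edgeSet} (he : e ∉ fractionalEdges x) :
    x e = 0 ∨ x e = 2 := by
  simp only [mem_fractionalEdges, Set.mem_Ioo, not_and_or, not_lt] at he
  have := hx.1 e
  rcases he with h | h
  · exact Or.inl (by linarith)
  · exact Or.inr (by linarith)

theorem sum_filter_mem_fractionalEdges_eq_two
    (hx : x ∈ perfect2MatchingPolytope G) {u : V}
    (hu : {e ∈ fractionalEdges x | u ∈ e.1}.Nonempty) :
    ∑ e ∈ fractionalEdges x with u ∈ e.1, x e = 2 := by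
  set F := fractionalEdges x
  set g : G.edgeSet → ℝ := fun e => if u ∈ (e : Sym2 V) then x e else 0
  have hsplit : ∑ e ∈ F with u ∈ e.1, x e + ∑ e ∈ Fᶜ, g e = 2 := by
    rw [sum_filter, sum_add_sum_compl]
    exact hx.2 u
  have hpos : 0 < ∑ e ∈ F with u ∈ e.1, x e :=
    sum_pos (fun e he => (mem_fractionalEdges.1 (mem_filter.1 he).1).1) hu
  have hg_nonneg : ∀ e, 0 ≤ g e := fun e => by
    by_cases h : u ∈ (e : Sym2 V) <;> simp [g, h, (hx.1 e).1]
  -- An edge outside `F` carries `0` or `2`, and here the total it shares with others is `< 2`.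
  have hrest : ∑ e ∈ Fᶜ, g e = 0 := by
    refine sum_eq_zero fun e he => ?_
    have hlt : g e < 2 := by
      linarith [single_le_sum (fun f _ => hg_nonneg f) he]
    by_cases h : u ∈ (e : Sym2 V)
    · simp only [g, h, if_true] at hlt ⊢
      exact (eq_zero_or_eq_two_of_notMem_fractionalEdges hx (mem_compl.1 he)).resolve_right
        hlt.ne
    · simp [g, h]
  linarith

theorem two_le_card_filter_mem_fractionalEdges
    (hx : x ∈ perfect2MatchingPolytope G) {u : V}
    (hu : {e ∈ fractionalEdges x | u ∈ e.1}.Nonempty) :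
    2 ≤ #{e ∈ fractionalEdges x | u ∈ e.1} := by
  by_contra! hlt
  have hone : #{e ∈ fractionalEdges x | u ∈ e.1} = 1 := by have := hu.card_pos; omega
  obtain ⟨e, he⟩ := card_eq_one.1 hone
  have hsum := sum_filter_mem_fractionalEdges_eq_two hx hu
  rw [he, sum_singleton] at hsum
  have hfrac : e ∈ fractionalEdges x := (mem_filter.1 (he ▸ mem_singleton_self e)).1
  exact (mem_fractionalEdges.1 hfrac).2.ne hsum

theorem eventually_add_smul_mem_perfect2MatchingPolytope {d : G.edgeSet → ℝ}
    (hx : x ∈ perfect2MatchingPolytope G) (hd : ∀ e ∉ fractionalEdges x, d e = 0)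
    (hker : G.edgeIncidenceMap ℝ d = 0) :
    ∀ᶠ t in 𝓝 (0 : ℝ), x + t • d ∈ perfect2MatchingPolytope G := by
  rw [mem_perfect2MatchingPolytope_iff] at hx
  simp only [mem_perfect2MatchingPolytope_iff, map_add, map_smul, hker, hx.2, smul_zero,
    add_zero, and_true, eventually_all]
  intro e
  by_cases he : e ∈ fractionalEdges x
  · have hcont : Continuous fun t : ℝ => x e + t * d e := by fun_prop
    filter_upwards [(hcont.tendsto' 0 (x e) (by simp)).eventually
      (isOpen_Ioo.mem_nhds (mem_fractionalEdges.1 he))] with t ht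
    exact Set.Ioo_subset_Icc_self ht
  · simp [hd e he, hx.1 e]

theorem eq_zero_of_edgeIncidenceMap_eq_zero {d : G.edgeSet → ℝ}
    (hx : x ∈ (perfect2MatchingPolytope G).extremePoints ℝ)
    (hd : ∀ e ∉ fractionalEdges x, d e = 0) (hker : G.edgeIncidenceMap ℝ d = 0) : d = 0 :=
  eq_zero_of_mem_extremePoints_of_eventually_add_smul_mem hx
    (eventually_add_smul_mem_perfect2MatchingPolytope hx.1 hd hker)

theorem card_fractionalEdges_le
    (hx : x ∈ (perfect2MatchingPolytope G).extremePoints ℝ) :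
    #(fractionalEdges x) ≤ #{u | ({e ∈ fractionalEdges x | u ∈ e.1}).Nonempty} := by
  set F := fractionalEdges x
  set S : Finset V := {u | ({e ∈ F | u ∈ e.1}).Nonempty}
  let extend := Function.ExtendByZero.linearMap ℝ ((↑) : F → G.edgeSet)
  have hextend : ∀ d, ∀ e ∉ F, extend d e = 0 := fun d e he =>
    Function.extend_apply' _ _ _ fun ⟨f, hf⟩ => he (hf ▸ f.2)
  let ψ : (F → ℝ) →ₗ[ℝ] (S → ℝ) :=
    LinearMap.funLeft ℝ ℝ ((↑) : S → V) ∘ₗ G.edgeIncidenceMap ℝ ∘ₗ extend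
  have hψ : Function.Injective ψ := by
    refine (injective_iff_map_eq_zero ψ).2 fun d hd => ?_
    have hker : G.edgeIncidenceMap ℝ (extend d) = 0 := by
      ext u
      by_cases hu : u ∈ S
      · exact congrFun hd ⟨u, hu⟩
      · have hempty : {e ∈ F | u ∈ e.1} = ∅ :=
          not_nonempty_iff_eq_empty.1 fun h => hu (mem_filter.2 ⟨mem_univ u, h⟩)
        rw [edgeIncidenceMap_apply_of_forall_notMem_eq_zero (hextend d), hempty, sum_empty,
          Pi.zero_apply]
    have hzero := eq_zero_of_edgeIncidenceMap_eq_zero hx (hextend d) hker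
    ext e
    simpa [extend, Subtype.val_injective.extend_apply] using congrFun hzero e
  simpa using LinearMap.finrank_le_finrank_of_injective hψ

theorem card_filter_mem_fractionalEdges_eq_two
    (hx : x ∈ (perfect2MatchingPolytope G).extremePoints ℝ) {u : V}
    (hu : {e ∈ fractionalEdges x | u ∈ e.1}.Nonempty) :
    #{e ∈ fractionalEdges x | u ∈ e.1} = 2 := by
  set F := fractionalEdges x
  set S : Finset V := {u | ({e ∈ F | u ∈ e.1}).Nonempty}
  have hdeg : ∀ v ∈ S, 2 ≤ #{e ∈ F | v ∈ e.1} := fun v hv =>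
    two_le_card_filter_mem_fractionalEdges hx.1 (mem_filter.1 hv).2
  -- Handshaking gives `∑_{v ∈ S} deg v = 2 #F ≤ 2 #S`, forcing every degree down to `2`.
  have hsum : ∑ v ∈ S, #{e ∈ F | v ∈ e.1} = ∑ v ∈ S, 2 := by
    refine le_antisymm ?_ (sum_le_sum hdeg)
    calc ∑ v ∈ S, #{e ∈ F | v ∈ e.1} = ∑ v, #{e ∈ F | v ∈ e.1} :=
          sum_filter_of_ne fun v _ h => card_ne_zero.1 h
      _ = 2 * #F := sum_card_filter_mem_eq_two_mul_card F
      _ ≤ 2 * #S := by have : #F ≤ #S := card_fractionalEdges_le hx; omega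
      _ = ∑ v ∈ S, 2 := by rw [sum_const, smul_eq_mul, mul_comm]
  exact ((sum_eq_sum_iff_of_le hdeg).1 hsum.symm u (by simpa [S] using hu)).symm

theorem eq_one_of_mem_fractionalEdges
    (hx : x ∈ (perfect2MatchingPolytope G).extremePoints ℝ) {e : G.edgeSet}
    (he : e ∈ fractionalEdges x) : x e = 1 := by
  set F := fractionalEdges x
  set y : G.edgeSet → ℝ := fun e => if e ∈ F then x e - 1 else 0
  have hy : ∀ e ∉ F, y e = 0 := fun e he => if_neg he
  have hker : G.edgeIncidenceMap ℝ y = 0 := by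
    ext u
    rw [edgeIncidenceMap_apply_of_forall_notMem_eq_zero hy, Pi.zero_apply]
    rcases ({e ∈ F | u ∈ e.1}).eq_empty_or_nonempty with hu | hu
    · rw [hu, sum_empty]
    · rw [sum_congr rfl fun e he => if_pos (mem_filter.1 he).1, sum_sub_distrib,
        sum_filter_mem_fractionalEdges_eq_two hx.1 hu, sum_const,
        card_filter_mem_fractionalEdges_eq_two hx hu]
      norm_num
  have hxe := congrFun (eq_zero_of_edgeIncidenceMap_eq_zero hx hy hker) e
  simp only [y, if_pos he, Pi.zero_apply] at hxe
  linarith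

end Perfect2Matching

theorem perfect2MatchingPolytope_extremePoints_halfIntegral_general
    {V : Type} [Fintype V] [DecidableEq V] (G : SimpleGraph V) [Fintype G.edgeSet]
    (x : G.edgeSet → ℝ)
    (hx : x ∈ Set.extremePoints ℝ (perfect2MatchingPolytope G)) :
    ∀ e : G.edgeSet, x e = 0 ∨ x e = 1 ∨ x e = 2 := by
  intro e
  by_cases he : e ∈ fractionalEdges x
  · exact Or.inr (Or.inl (eq_one_of_mem_fractionalEdges hx he))
  · exact (eq_zero_or_eq_two_of_notMem_fractionalEdges hx.1 he).imp_right Or.inr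

theorem perfect2MatchingPolytope_extremePoints_halfIntegral
    {V : Type} [Fintype V] [DecidableEq V] (G : SimpleGraph V) [Fintype G.edgeSet]
    (hcov : ∀ v : V, ∃ u : V, G.Adj v u)
    (x : G.edgeSet → ℝ)
    (hx : x ∈ Set.extremePoints ℝ (perfect2MatchingPolytope G)) :
    ∀ e : G.edgeSet, x e = 0 ∨ x e = 1 ∨ x e = 2 :=
  perfect2MatchingPolytope_extremePoints_halfIntegral_general G x hx
end

section
/- Let G be a finite bipartite graph and let P_PM(G) ⊆ ℝ^{E(G)} be defined by the inequalities 0 ≤ x_e ≤ 1 for all e ∈ E(G) and the equalities ∑_{e incident to u} x_e = 1 for all u ∈ V(G). The vertices (extreme points) of P_PM(G) are exactly the indicator vectors of perfect matchings of G; in particular, the number of vertices of P_PM(G) equals the number of perfect matchings of G. -/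
/-!
A point of the polytope with all coordinates in `{0, 1}` is the indicator vector of a perfect
matching, and it is extreme already in the cube `[0, 1]^E`. Conversely, let `x` have a fractional
coordinate and let `F` be its set of fractional edges. A vertex on an edge of `F` lies on a second
edge of `F`, since otherwise the sum at that vertex would be a fractional number plus an integer;
as every edge has two ends, `F` touches at most `|F|` vertices. The rows of the incidence matrix of
a bipartite graph, signed by colour class, sum to zero, so the incidence matrix of `F` has rank
less than `|F|`: some nonzero `δ` supported on `F` has all vertex sums zero. Then `x ± tδ` lie in
the polytope for small `t`, and `x` is not extreme.
-/

open Finset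

/-- The polytope `P_PM(G)` in `ℝ^{E(G)}`: `0 ≤ x_e ≤ 1` for every edge,
and `∑_{e ∋ u} x_e = 1` for every vertex `u`. -/
def perfectMatchingPolytope {V : Type} [Fintype V] [DecidableEq V]
    (G : SimpleGraph V) [Fintype G.edgeSet] : Set (G.edgeSet → ℝ) :=
  {x | (∀ e : G.edgeSet, 0 ≤ x e ∧ x e ≤ 1) ∧
       (∀ u : V, ∑ e : G.edgeSet, (if u ∈ (e : Sym2 V) then x e else 0) = 1)}

/-- `M` is a perfect matching of `G`: a set of pairwise disjoint edges covering
every vertex. -/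
def IsPerfectMatchingSet {V : Type} (G : SimpleGraph V) (M : Set (Sym2 V)) : Prop :=
  M ⊆ G.edgeSet ∧
  (∀ e ∈ M, ∀ f ∈ M, e ≠ f → ∀ v : V, v ∈ e → v ∉ f) ∧
  (∀ v : V, ∃ e ∈ M, v ∈ e)

/-- The indicator vector in `ℝ^{E(G)}` of a set `M` of edges. -/
noncomputable def edgeIndicator {V : Type} (G : SimpleGraph V) (M : Set (Sym2 V)) :
    G.edgeSet → ℝ :=
  Set.indicator {e : G.edgeSet | (e : Sym2 V) ∈ M} (fun _ => 1)

open Filter Topology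

theorem notMem_extremePoints_of_add_mem_of_sub_mem {𝕜 E : Type*} [Field 𝕜] [LinearOrder 𝕜]
    [IsStrictOrderedRing 𝕜] [AddCommGroup E] [Module 𝕜 E] {A : Set E} {x v : E} (hv : v ≠ 0)
    (hadd : x + v ∈ A) (hsub : x - v ∈ A) : x ∉ A.extremePoints 𝕜 := by
  intro hx
  have hmid : x ∈ openSegment 𝕜 (x + v) (x - v) :=
    ⟨1 / 2, 1 / 2, by norm_num, by norm_num, by norm_num, by
      rw [smul_add, smul_sub, add_add_sub_cancel, ← add_smul]; norm_num⟩
  exact hv (by simpa using hx.2 hadd hsub hmid)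

theorem mem_extremePoints_of_forall_eq_zero_or_eq_one {ι : Type*} {P : Set (ι → ℝ)}
    (hP : P ⊆ Set.univ.pi fun _ => Set.Icc 0 1) {x : ι → ℝ} (hx : x ∈ P)
    (h01 : ∀ i, x i = 0 ∨ x i = 1) : x ∈ P.extremePoints ℝ := by
  refine inter_extremePoints_subset_extremePoints_of_subset hP ⟨hx, ?_⟩
  rw [extremePoints_pi]
  intro i _
  rw [Set.extremePoints_Icc zero_le_one]
  exact h01 i

theorem Sym2.sum_ite_mem_mk_of_ne {V M : Type*} [Fintype V] [DecidableEq V] [AddCommMonoid M]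
    {f : V → M} {a b : V} (hab : a ≠ b) :
    ∑ u, (if u ∈ s(a, b) then f u else 0) = f a + f b := by
  rw [← Finset.sum_filter, show ({u | u ∈ s(a, b)} : Finset V) = {a, b} by ext; simp,
    Finset.sum_pair hab]

theorem Finset.card_le_card_of_two_le_card_filter_mem {V : Type*} [DecidableEq V]
    {W : Finset V} {F : Finset (Sym2 V)} (h : ∀ u ∈ W, 2 ≤ #{e ∈ F | u ∈ e}) : #W ≤ #F := by
  have hends : ∀ e ∈ F, #{u ∈ W | u ∈ e} ≤ 2 := by
    intro e _
    induction e using Sym2.ind with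
    | h a b =>
      calc #{u ∈ W | u ∈ s(a, b)} ≤ #({a, b} : Finset V) :=
            Finset.card_le_card fun u hu => by simp_all
        _ ≤ 2 := Finset.card_le_two
  have := Finset.card_mul_le_card_mul (· ∈ ·) h hends
  omega

section EdgeIndicator

variable {V : Type} {G : SimpleGraph V}

theorem edgeIndicator_of_mem {M : Set (Sym2 V)} {e : G.edgeSet} (h : (e : Sym2 V) ∈ M) :
    edgeIndicator G M e = 1 :=
  Set.indicator_of_mem (show e ∈ {e : G.edgeSet | (e : Sym2 V) ∈ M} from h) _

theorem edgeIndicator_of_notMem {M : Set (Sym2 V)} {e : G.edgeSet} (h : (e : Sym2 V) ∉ M) :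
    edgeIndicator G M e = 0 :=
  Set.indicator_of_notMem (show e ∉ {e : G.edgeSet | (e : Sym2 V) ∈ M} from h) _

theorem edgeIndicator_eq_zero_or_eq_one (M : Set (Sym2 V)) (e : G.edgeSet) :
    edgeIndicator G M e = 0 ∨ edgeIndicator G M e = 1 := by
  by_cases h : (e : Sym2 V) ∈ M
  exacts [.inr (edgeIndicator_of_mem h), .inl (edgeIndicator_of_notMem h)]

theorem edgeIndicator_injOn : Set.InjOn (edgeIndicator G) {M | M ⊆ G.edgeSet} := by
  have hsub : ∀ {A B : Set (Sym2 V)}, A ⊆ G.edgeSet →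
      edgeIndicator G A = edgeIndicator G B → A ⊆ B := fun hA h s hs => by
    by_contra hsB
    have := congrFun h ⟨s, hA hs⟩
    rw [edgeIndicator_of_mem hs, edgeIndicator_of_notMem hsB] at this
    exact one_ne_zero this
  exact fun M hM M' hM' h => (hsub hM h).antisymm (hsub hM' h.symm)

end EdgeIndicator

section IncidenceSum

variable {V : Type} [DecidableEq V] {G : SimpleGraph V} [Fintype G.edgeSet]

variable (G) in
def incidenceSum (x : G.edgeSet → ℝ) (u : V) : ℝ :=
  ∑ e : G.edgeSet, if u ∈ (e : Sym2 V) then x e else 0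

theorem incidenceSum_add_smul (x δ : G.edgeSet → ℝ) (t : ℝ) (u : V) :
    incidenceSum G (x + t • δ) u = incidenceSum G x u + t * incidenceSum G δ u := by
  simp only [incidenceSum, Finset.mul_sum, ← Finset.sum_add_distrib]
  refine Finset.sum_congr rfl fun e _ => ?_
  split_ifs <;> simp

theorem add_le_incidenceSum {x : G.edgeSet → ℝ} (hx : ∀ e, 0 ≤ x e) {e f : G.edgeSet} {u : V}
    (hef : e ≠ f) (he : u ∈ (e : Sym2 V)) (hf : u ∈ (f : Sym2 V)) :
    x e + x f ≤ incidenceSum G x u := by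
  calc x e + x f = ∑ g ∈ {e, f}, if u ∈ (g : Sym2 V) then x g else 0 := by
        simp [Finset.sum_pair hef, he, hf]
    _ ≤ incidenceSum G x u :=
        Finset.sum_le_sum_of_subset_of_nonneg (Finset.subset_univ _) fun g _ _ => by
          split_ifs
          exacts [hx g, le_rfl]

variable [Fintype V]

theorem incidenceSum_eq_zero_of_forall_ne (hbip : G.Colorable 2)
    (δ : G.edgeSet → ℝ) (w₀ : V) (h : ∀ u ≠ w₀, incidenceSum G δ u = 0) :
    incidenceSum G δ w₀ = 0 := by
  obtain ⟨c⟩ := hbip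
  let σ : Fin 2 → ℝ := ![1, -1]
  have hσ : ∀ e : G.edgeSet, ∑ u, (if u ∈ (e : Sym2 V) then σ (c u) else 0) = 0 := by
    rintro ⟨e, he⟩
    induction e using Sym2.ind with
    | h a b =>
      rw [Sym2.sum_ite_mem_mk_of_ne (G.ne_of_adj he)]
      have hc := c.valid he
      generalize c a = i, c b = j at hc
      fin_cases i <;> fin_cases j <;> simp_all [σ]
  have hsigned : ∑ u, σ (c u) * incidenceSum G δ u = 0 :=
    calc ∑ u, σ (c u) * incidenceSum G δ u
        = ∑ e, δ e * ∑ u, (if u ∈ (e : Sym2 V) then σ (c u) else 0) := by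
          simp only [incidenceSum, Finset.mul_sum]
          rw [Finset.sum_comm]
          exact Finset.sum_congr rfl fun e _ => Finset.sum_congr rfl fun u _ => by
            split_ifs <;> ring
      _ = 0 := by simp [hσ]
  rw [Finset.sum_eq_single w₀ (fun u _ hu => by rw [h u hu, mul_zero]) (by simp)] at hsigned
  refine (mul_eq_zero.1 hsigned).resolve_left ?_
  generalize c w₀ = i
  fin_cases i <;> simp [σ]

theorem exists_ne_zero_incidenceSum_eq_zero (hbip : G.Colorable 2)
    {F : Finset G.edgeSet} (hF : F.Nonempty)
    (hdeg : ∀ e ∈ F, ∀ u ∈ (e : Sym2 V), 2 ≤ #{f ∈ F | u ∈ f.1}) :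
    ∃ δ : G.edgeSet → ℝ, δ ≠ 0 ∧ (∀ e ∉ F, δ e = 0) ∧ ∀ u, incidenceSum G δ u = 0 := by
  obtain ⟨e₀, he₀⟩ := hF
  set w₀ := (e₀ : Sym2 V).out.1
  set W : Finset V := {u | ∃ e ∈ F, u ∈ (e : Sym2 V)}
  have hW : #W ≤ #F := by
    rw [← Finset.card_map (Function.Embedding.subtype _)]
    refine Finset.card_le_card_of_two_le_card_filter_mem fun u hu => ?_
    obtain ⟨e, he, hue⟩ := (Finset.mem_filter.1 hu).2
    rw [Finset.filter_map, Finset.card_map]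
    exact hdeg e he u hue
  have hw₀ : w₀ ∈ W := Finset.mem_filter.2 ⟨Finset.mem_univ _, e₀, he₀, Sym2.out_fst_mem _⟩
  -- the incidence matrix of `F` without the row of `w₀`, which the other rows determine
  let A : Matrix (W.erase w₀) F ℝ := fun u e => if (u : V) ∈ (e : Sym2 V) then 1 else 0
  have hker : LinearMap.ker A.mulVecLin ≠ ⊥ :=
    LinearMap.ker_ne_bot_of_finrank_lt <| by
      simp only [Module.finrank_fintype_fun_eq_card, Fintype.card_coe, Finset.card_erase_of_mem hw₀]
      have := Finset.card_pos.2 ⟨w₀, hw₀⟩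
      omega
  obtain ⟨g, hg, hg0⟩ := Submodule.exists_mem_ne_zero_of_ne_bot hker
  set δ : G.edgeSet → ℝ := fun e => if h : e ∈ F then g ⟨e, h⟩ else 0
  have hsum : ∀ u, incidenceSum G δ u = ∑ e : F, if u ∈ (e : Sym2 V) then g e else 0 := by
    intro u
    rw [incidenceSum, ← Finset.sum_subset (Finset.subset_univ F) fun e _ he => by simp [δ, he],
      ← Finset.sum_coe_sort]
    simp [δ]
  have hne : ∀ u ≠ w₀, incidenceSum G δ u = 0 := by
    intro u hu
    rw [hsum]
    by_cases huW : u ∈ W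
    · have := congrFun (LinearMap.mem_ker.1 hg) ⟨u, Finset.mem_erase.2 ⟨hu, huW⟩⟩
      rw [Matrix.mulVecLin_apply] at this
      simpa [A, Matrix.mulVec, dotProduct, ite_mul] using this
    · exact Finset.sum_eq_zero fun e _ =>
        if_neg fun h => huW (Finset.mem_filter.2 ⟨Finset.mem_univ _, e, e.2, h⟩)
  refine ⟨δ, fun hδ => hg0 ?_, fun e he => dif_neg he, fun u => ?_⟩
  · ext e
    simpa [δ] using congrFun hδ e
  · rcases eq_or_ne u w₀ with rfl | hu
    exacts [incidenceSum_eq_zero_of_forall_ne hbip δ _ hne, hne u hu]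

theorem mem_perfectMatchingPolytope_iff {x : G.edgeSet → ℝ} :
    x ∈ perfectMatchingPolytope G ↔
      (∀ e, 0 ≤ x e ∧ x e ≤ 1) ∧ ∀ u, incidenceSum G x u = 1 :=
  Iff.rfl

theorem notMem_extremePoints_of_incidenceSum_eq_zero {x δ : G.edgeSet → ℝ}
    (hx : x ∈ perfectMatchingPolytope G) (hδ : δ ≠ 0)
    (hfrac : ∀ e, δ e ≠ 0 → 0 < x e ∧ x e < 1) (hsum : ∀ u, incidenceSum G δ u = 0) :
    x ∉ (perfectMatchingPolytope G).extremePoints ℝ := by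
  rw [mem_perfectMatchingPolytope_iff] at hx
  have hbox : ∀ᶠ t in 𝓝 (0 : ℝ), ∀ e, 0 ≤ x e + t * δ e ∧ x e + t * δ e ≤ 1 := by
    refine Filter.eventually_all.2 fun e => ?_
    by_cases he : δ e = 0
    · exact Filter.Eventually.of_forall fun t => by simpa [he] using (hx.1 e)
    · have hcont : Tendsto (fun t : ℝ => x e + t * δ e) (𝓝 0) (𝓝 (x e)) := by
        simpa using ((tendsto_id (x := 𝓝 (0 : ℝ))).mul_const (δ e)).const_add (x e)
      exact (hcont.eventually (Ioo_mem_nhds (hfrac e he).1 (hfrac e he).2)).mono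
        fun t ht => ⟨ht.1.le, ht.2.le⟩
  have hmem : ∀ᶠ t in 𝓝 (0 : ℝ), x + t • δ ∈ perfectMatchingPolytope G :=
    hbox.mono fun t ht => mem_perfectMatchingPolytope_iff.2
      ⟨ht, fun u => by rw [incidenceSum_add_smul, hx.2 u, hsum u, mul_zero, add_zero]⟩
  obtain ⟨ε, hε, hball⟩ := Metric.eventually_nhds_iff.1 hmem
  have hε2 : |ε / 2| < ε := by rw [abs_of_pos (by positivity)]; linarith
  have hadd := @hball (ε / 2) (by rwa [Real.dist_0_eq_abs])
  have hsub := @hball (-(ε / 2)) (by rwa [Real.dist_0_eq_abs, abs_neg])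
  rw [neg_smul, ← sub_eq_add_neg] at hsub
  exact notMem_extremePoints_of_add_mem_of_sub_mem (smul_ne_zero (by positivity) hδ) hadd hsub

theorem exists_fractional_edge_ne {x : G.edgeSet → ℝ}
    (hx : x ∈ perfectMatchingPolytope G) {e₀ : G.edgeSet} {u : V} (hu : u ∈ (e₀ : Sym2 V))
    (h0 : 0 < x e₀) (h1 : x e₀ < 1) :
    ∃ e ≠ e₀, u ∈ (e : Sym2 V) ∧ 0 < x e ∧ x e < 1 := by
  obtain ⟨hbox, hsum⟩ := mem_perfectMatchingPolytope_iff.1 hx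
  by_contra! hnonfrac
  by_cases hpos : ∃ e ≠ e₀, u ∈ (e : Sym2 V) ∧ 0 < x e
  · obtain ⟨e, hne, hue, hxe⟩ := hpos
    have := add_le_incidenceSum (fun e => (hbox e).1) hne.symm hu hue
    linarith [hnonfrac e hne hue hxe, hsum u]
  · push Not at hpos
    have : incidenceSum G x u = x e₀ := by
      refine (Finset.sum_eq_single e₀ (fun e _ hne => ?_) (by simp)).trans (if_pos hu)
      split_ifs with hue
      exacts [le_antisymm (hpos e hne hue) (hbox e).1, rfl]
    linarith [hsum u]

theorem eq_zero_or_eq_one_of_mem_extremePoints (hbip : G.Colorable 2)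
    {x : G.edgeSet → ℝ} (hx : x ∈ (perfectMatchingPolytope G).extremePoints ℝ) (e : G.edgeSet) :
    x e = 0 ∨ x e = 1 := by
  by_contra! he
  set F : Finset G.edgeSet := {f | 0 < x f ∧ x f < 1}
  have hmemF : ∀ f, f ∈ F ↔ 0 < x f ∧ x f < 1 := by simp [F]
  have heF : e ∈ F := (hmemF e).2
    ⟨(hx.1.1 e).1.lt_of_ne he.1.symm, (hx.1.1 e).2.lt_of_ne he.2⟩
  obtain ⟨δ, hδ, hδF, hsum⟩ := exists_ne_zero_incidenceSum_eq_zero hbip ⟨e, heF⟩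
    fun f hf u hu => by
      obtain ⟨f', hne, hu', hf'⟩ :=
        exists_fractional_edge_ne hx.1 hu ((hmemF f).1 hf).1 ((hmemF f).1 hf).2
      exact Finset.one_lt_card.2
        ⟨f, by simp [hf, hu], f', by simp [hu', (hmemF f').2 hf'], hne.symm⟩
  refine notMem_extremePoints_of_incidenceSum_eq_zero hx.1 hδ (fun f hf => ?_) hsum hx
  by_contra hf'
  exact hf (hδF f fun h => hf' ((hmemF f).1 h))

theorem IsPerfectMatchingSet.edgeIndicator_mem_perfectMatchingPolytope
    {M : Set (Sym2 V)} (hM : IsPerfectMatchingSet G M) :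
    edgeIndicator G M ∈ perfectMatchingPolytope G := by
  obtain ⟨hsub, hdisj, hcov⟩ := hM
  refine mem_perfectMatchingPolytope_iff.2 ⟨fun e => ?_, fun u => ?_⟩
  · rcases edgeIndicator_eq_zero_or_eq_one M e with h | h <;> simp [h]
  · obtain ⟨f, hfM, huf⟩ := hcov u
    refine (Finset.sum_eq_single ⟨f, hsub hfM⟩ (fun e _ hne => ?_) (by simp)).trans ?_
    · split_ifs with hue
      · exact edgeIndicator_of_notMem fun heM =>
          hdisj _ heM _ hfM (fun h => hne (Subtype.ext h)) u hue huf
      · rfl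
    · rw [if_pos huf, edgeIndicator_of_mem (e := ⟨f, hsub hfM⟩) hfM]

theorem exists_isPerfectMatchingSet_of_forall_eq_zero_or_eq_one
    {x : G.edgeSet → ℝ} (hx : x ∈ perfectMatchingPolytope G) (h01 : ∀ e, x e = 0 ∨ x e = 1) :
    ∃ M : Set (Sym2 V), IsPerfectMatchingSet G M ∧ x = edgeIndicator G M := by
  obtain ⟨hbox, hsum⟩ := mem_perfectMatchingPolytope_iff.1 hx
  have hmem : ∀ e : G.edgeSet, (e : Sym2 V) ∈ Subtype.val '' {f | x f = 1} ↔ x e = 1 :=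
    fun e => Subtype.val_injective.mem_set_image
  refine ⟨Subtype.val '' {f | x f = 1}, ⟨Subtype.coe_image_subset _ _, ?_, fun v => ?_⟩, ?_⟩
  · rintro _ ⟨e, he, rfl⟩ _ ⟨f, hf, rfl⟩ hne v hve hvf
    have := add_le_incidenceSum (fun e => (hbox e).1) (fun h => hne (congrArg _ h)) hve hvf
    linarith [hsum v, show x e = 1 from he, show x f = 1 from hf]
  · obtain ⟨e, -, he⟩ := Finset.exists_ne_zero_of_sum_ne_zero ((hsum v).symm ▸ one_ne_zero)
    by_cases hve : v ∈ (e : Sym2 V)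
    · rw [if_pos hve] at he
      exact ⟨e, (hmem e).2 ((h01 e).resolve_left he), hve⟩
    · exact absurd (if_neg hve) he
  · funext e
    rcases h01 e with h | h
    · rw [h, edgeIndicator_of_notMem fun h' => by simp [(hmem e).1 h'] at h]
    · rw [h, edgeIndicator_of_mem ((hmem e).2 h)]

end IncidenceSum

theorem perfectMatchingPolytope_extremePoints
    {V : Type} [Fintype V] [DecidableEq V] (G : SimpleGraph V) [Fintype G.edgeSet]
    (hbip : G.Colorable 2) :
    Set.extremePoints ℝ (perfectMatchingPolytope G) =
      {x | ∃ M : Set (Sym2 V), IsPerfectMatchingSet G M ∧ x = edgeIndicator G M} ∧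
    (Set.extremePoints ℝ (perfectMatchingPolytope G)).ncard =
      {M : Set (Sym2 V) | IsPerfectMatchingSet G M}.ncard := by
  have hext : Set.extremePoints ℝ (perfectMatchingPolytope G) =
      {x | ∃ M : Set (Sym2 V), IsPerfectMatchingSet G M ∧ x = edgeIndicator G M} := by
    ext x
    refine ⟨fun hx => exists_isPerfectMatchingSet_of_forall_eq_zero_or_eq_one hx.1
      (eq_zero_or_eq_one_of_mem_extremePoints hbip hx), ?_⟩
    rintro ⟨M, hM, rfl⟩
    exact mem_extremePoints_of_forall_eq_zero_or_eq_one (fun y hy e _ => hy.1 e)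
      hM.edgeIndicator_mem_perfectMatchingPolytope (edgeIndicator_eq_zero_or_eq_one M)
  refine ⟨hext, ?_⟩
  rw [hext, ← (edgeIndicator_injOn.mono fun M hM => hM.1).ncard_image]
  congr 1
  ext x
  simp [eq_comm]
end

section
/- Every network matrix is totally unimodular: if (V,E) is a finite directed graph and (V,T) is a directed tree on the same vertex set, then the |T| × |E| matrix A with A_{t,e} = +1 if the tree arc t occurs in the forward direction on the unique path in T from the tail of e to the head of e, A_{t,e} = −1 if t occurs in the backward direction on that path, and A_{t,e} = 0 otherwise, is totally unimodular. -/
/-!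
Fix a vertex `w` and let `B` be the incidence matrix of the tree arcs with the row of `w` deleted.
The column of the network matrix `A` at a graph arc `e` is the unit flow along the tree path from
the tail to the head of `e`, so by flow conservation `B * A` is the incidence matrix of the graph
arcs with the row of `w` deleted. Hence `B * [1 | A] = [B | B * A]` is a submatrix of the
incidence matrix of a directed graph, which is totally unimodular; as `B` is moreover invertible,
`det B = ±1`. Every square submatrix of `A`, bordered by unit columns, is a square submatrix of
`[1 | A]` with the same determinant, and multiplying by `B` changes it only by the factor `det B`.
-/

/-- The unique path between two vertices of a tree, as a walk. -/
noncomputable def treePath {V : Type} {T : SimpleGraph V} (hT : T.IsTree) (u v : V) :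
    T.Walk u v :=
  (hT.existsUnique_path u v).choose

open scoped Classical in
/-- The network matrix generated by a directed tree and a directed graph on a common
vertex set `V`.  The tree arcs (rows) are given by their tails `tt` and heads `th`;
the graph arcs (columns) are given by their tails `tl` and heads `hd` (parallel arcs
are allowed).  The entry at `(r, e)` is `+1` if the tree arc `r` occurs forward on the
unique tree path from `tl e` to `hd e`, `-1` if it occurs backward, and `0` otherwise. -/
noncomputable def networkMatrix {V ρ ι : Type} (T : SimpleGraph V) (hT : T.IsTree)
    (tt th : ρ → V) (hadj : ∀ r, T.Adj (tt r) (th r)) (tl hd : ι → V) :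
    Matrix ρ ι ℝ :=
  Matrix.of fun r e =>
    if SimpleGraph.Dart.mk (tt r, th r) (hadj r) ∈ (treePath hT (tl e) (hd e)).darts
      then 1
    else if SimpleGraph.Dart.mk (th r, tt r) (hadj r).symm ∈ (treePath hT (tl e) (hd e)).darts
      then -1
    else 0

/-- `A` is a network matrix: it is generated by some directed tree (rows in bijection
with the tree arcs) and some directed graph (columns) on a common finite vertex set. -/
def IsNetworkMatrix {ρ ι : Type} (A : Matrix ρ ι ℝ) : Prop :=
  ∃ (V : Type) (_ : Fintype V) (T : SimpleGraph V) (hT : T.IsTree)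
    (tt th : ρ → V) (hadj : ∀ r, T.Adj (tt r) (th r)) (tl hd : ι → V),
    Function.Injective (fun r => s(tt r, th r)) ∧
    (∀ e ∈ T.edgeSet, ∃ r, s(tt r, th r) = e) ∧
    A = networkMatrix T hT tt th hadj tl hd

open Matrix

section SignTypeRange

variable {R : Type*} [CommRing R]

lemma mul_mem_range_signTypeCast {x y : R} (hx : x ∈ Set.range SignType.cast)
    (hy : y ∈ Set.range SignType.cast) : x * y ∈ Set.range SignType.cast := by
  obtain ⟨s, rfl⟩ := hx
  obtain ⟨t, rfl⟩ := hy
  exact ⟨s * t, SignType.coe_mul s t⟩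

lemma mul_self_eq_one_of_mem_range_signTypeCast {x : R} (hx : x ∈ Set.range SignType.cast)
    (hu : IsUnit x) : x * x = 1 := by
  obtain ⟨s, rfl⟩ := hx
  cases s <;> simp_all [isUnit_zero_iff]

end SignTypeRange

lemma Matrix.det_eq_zero_of_sum_rows_eq_zero {n R : Type*} [Fintype n] [DecidableEq n]
    [Nonempty n] [CommRing R] {M : Matrix n n R} (h : ∀ j, ∑ i, M i j = 0) : M.det = 0 := by
  rw [← det_transpose]
  refine det_eq_zero_of_mulVec_eq_zero_of_mem_nonZeroDivisors (v := 1) ?_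
    (i := Classical.arbitrary n) (one_mem _)
  ext j
  simpa [mulVec, dotProduct] using h j

theorem Matrix.isTotallyUnimodular_of_mul_fromCols_one {ρ ι R : Type*} [CommRing R] [Fintype ρ]
    [DecidableEq ρ] {A : Matrix ρ ι R} {B : Matrix ρ ρ R} (hB : IsUnit B.det)
    (hBA : (B * fromCols (1 : Matrix ρ ρ R) A).IsTotallyUnimodular) : A.IsTotallyUnimodular := by
  intro k f g hf _
  let τ : Fin k ⊕ ↥(Set.range f)ᶜ ≃ ρ :=
    (Equiv.sumCongr (Equiv.ofInjective f hf) (Equiv.refl _)).trans (Equiv.Set.sumCompl _)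
  let c : Fin k ⊕ ↥(Set.range f)ᶜ → ρ ⊕ ι := Sum.elim (Sum.inr ∘ g) (Sum.inl ∘ Subtype.val)
  have hblock : (fromCols 1 A).submatrix τ c =
      fromBlocks (A.submatrix f g) 0 (A.submatrix Subtype.val g) 1 := by
    ext (i | s) (j | s')
    · rfl
    · exact one_apply_ne' fun h => s'.2 ⟨i, by simpa [τ] using h.symm⟩
    · rfl
    · simp [τ, c, one_apply, Subtype.ext_iff]
  have hdetB : B.det ∈ Set.range SignType.cast := by
    have : (B * fromCols 1 A).submatrix id Sum.inl = B := by ext; simp [mul_fromCols]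
    exact this ▸ (isTotallyUnimodular_iff_fintype _).mp hBA ρ id Sum.inl
  have hdetBC : (B.submatrix τ τ * (fromCols 1 A).submatrix τ c).det ∈ Set.range SignType.cast := by
    rw [submatrix_mul_equiv]
    exact (isTotallyUnimodular_iff_fintype _).mp hBA _ τ c
  rw [det_mul, det_submatrix_equiv_self, hblock, det_fromBlocks_zero₁₂, det_one, mul_one] at hdetBC
  rw [← one_mul (A.submatrix f g).det, ← mul_self_eq_one_of_mem_range_signTypeCast hdetB hB,
    mul_assoc]
  exact mul_mem_range_signTypeCast hdetB hdetBC

section Incidence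

variable {W ι : Type*} [DecidableEq W]

def incidenceMatrix (R : Type*) [Ring R] (tail head : ι → W) : Matrix W ι R :=
  of fun v e => (Pi.single (head e) 1 - Pi.single (tail e) 1 : W → R) v

variable {R : Type*} [CommRing R] (tail head : ι → W)

lemma incidenceMatrix_apply_mem_range (v : W) (e : ι) :
    incidenceMatrix R tail head v e ∈ Set.range SignType.cast := by
  simp only [incidenceMatrix, of_apply, Pi.sub_apply, Pi.single_apply]
  split_ifs
  exacts [⟨0, by simp⟩, ⟨1, by simp⟩, ⟨-1, by simp⟩, ⟨0, by simp⟩]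

lemma sum_incidenceMatrix_comp {κ : Type*} [Fintype κ] {f : κ → W} (hf : f.Injective) (e : ι) :
    ∑ i, incidenceMatrix R tail head (f i) e =
      (if ∃ i, f i = head e then 1 else 0) - if ∃ i, f i = tail e then 1 else 0 := by
  have (a : W) : ∑ i, (Pi.single a 1 : W → R) (f i) = if ∃ i, f i = a then 1 else 0 := by
    have := Finset.sum_pi_single' a (1 : R) (Finset.univ.map ⟨f, hf⟩)
    rw [Finset.sum_map] at this
    simpa using this
  simp only [incidenceMatrix, of_apply, Pi.sub_apply, Finset.sum_sub_distrib, this]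

theorem incidenceMatrix_isTotallyUnimodular :
    (incidenceMatrix R tail head).IsTotallyUnimodular := by
  intro k
  induction k with
  | zero => exact fun _ _ _ _ => ⟨1, by simp⟩
  | succ k ih =>
    intro f g hf hg
    set M := (incidenceMatrix R tail head).submatrix f g
    by_cases hcol : ∃ j i₀, ∀ i ≠ i₀, M i j = 0
    · obtain ⟨j, i₀, hj⟩ := hcol
      rw [det_succ_column M j,
        Finset.sum_eq_single i₀ (fun i _ hi => by simp [hj i hi]) (by simp)]
      refine mul_mem_range_signTypeCast (mul_mem_range_signTypeCast ⟨(-1) ^ (i₀ + j : ℕ), by simp⟩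
        (incidenceMatrix_apply_mem_range _ _ _ _)) ?_
      exact ih _ _ (hf.comp Fin.succAbove_right_injective) (hg.comp Fin.succAbove_right_injective)
    · refine ⟨0, (det_eq_zero_of_sum_rows_eq_zero fun j => ?_).symm⟩
      simp only [M, submatrix_apply, sum_incidenceMatrix_comp _ _ hf]
      -- a column with exactly one end vertex among the rows would have a single nonzero entry
      have : (∃ i, f i = head (g j)) ↔ ∃ i, f i = tail (g j) := by
        refine ⟨fun ⟨i₀, hi₀⟩ => ?_, fun ⟨i₀, hi₀⟩ => ?_⟩ <;> by_contra! hne <;>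
          refine hcol ⟨j, i₀, fun i hi => ?_⟩ <;>
          simp [M, incidenceMatrix, Pi.single_apply, hne i, hi₀ ▸ hf.ne hi]
      split_ifs <;> simp_all

end Incidence

namespace SimpleGraph

variable {V ρ : Type*} {G : SimpleGraph V}

lemma Walk.IsTrail.symm_notMem_darts {u v : V} {p : G.Walk u v} (hp : p.IsTrail) {d : G.Dart}
    (hd : d ∈ p.darts) : d.symm ∉ p.darts := fun hd' =>
  d.symm_ne (List.inj_on_of_nodup_map hp.edges_nodup hd' hd d.edge_symm)

lemma IsTree.nonempty_equiv_compl_singleton [Fintype V] [Fintype ρ] (hG : G.IsTree)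
    {a : ρ → G.Dart} (hinj : Function.Injective fun r => (a r).edge)
    (hsurj : ∀ e ∈ G.edgeSet, ∃ r, (a r).edge = e) (w : V) : Nonempty (ρ ≃ {v // v ≠ w}) := by
  classical
  have hbij : Function.Bijective fun r => (⟨(a r).edge, (a r).edge_mem⟩ : G.edgeSet) :=
    ⟨fun r r' h => hinj (congrArg Subtype.val h),
      fun ⟨e, he⟩ => (hsurj e he).imp fun r hr => Subtype.ext hr⟩
  have hcard := hG.card_edgeFinset
  rw [edgeFinset_card, ← Fintype.card_of_bijective hbij] at hcard
  rw [← Fintype.card_eq, Fintype.card_subtype_compl, Fintype.card_subtype_eq]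
  omega

variable [DecidableEq V]

def Walk.arcFlow (R : Type*) [Ring R] (a : ρ → G.Dart) {u v : V} (p : G.Walk u v) : ρ → R :=
  fun r => (p.darts.count (a r) : R) - p.darts.count (a r).symm

variable [Fintype ρ] {R : Type*} [Ring R] {a : ρ → G.Dart}

lemma incidenceMatrix_mulVec_dart (hinj : Function.Injective fun r => (a r).edge)
    (hsurj : ∀ e ∈ G.edgeSet, ∃ r, (a r).edge = e) (d : G.Dart) :
    incidenceMatrix R (fun r => (a r).fst) (fun r => (a r).snd) *ᵥ
      (fun r => (if d = a r then 1 else 0) - if d = (a r).symm then 1 else 0) =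
      Pi.single d.snd 1 - Pi.single d.fst 1 := by
  obtain ⟨r₀, hr₀⟩ := hsurj d.edge d.edge_mem
  ext v
  rw [mulVec, dotProduct, Finset.sum_eq_single r₀ (fun r _ hr => ?_) (by simp)]
  · rcases (dart_edge_eq_iff _ _).mp hr₀ with h | h <;>
      simp [incidenceMatrix, h, d.symm_ne.symm]
  · have hd : d ≠ a r := fun h => hr (hinj (by simp [hr₀, h]))
    have hd' : d ≠ (a r).symm := fun h => hr (hinj (by simp [hr₀, h]))
    simp [hd, hd']

theorem incidenceMatrix_mulVec_arcFlow (hinj : Function.Injective fun r => (a r).edge)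
    (hsurj : ∀ e ∈ G.edgeSet, ∃ r, (a r).edge = e) {u v : V} (p : G.Walk u v) :
    incidenceMatrix R (fun r => (a r).fst) (fun r => (a r).snd) *ᵥ p.arcFlow R a =
      Pi.single v 1 - Pi.single u 1 := by
  induction p with
  | nil => ext; simp [mulVec, dotProduct, Walk.arcFlow]
  | @cons u u' v h q ih =>
    have : (Walk.cons h q).arcFlow R a = q.arcFlow R a + fun r =>
        (if ⟨(u, u'), h⟩ = a r then 1 else 0) - if ⟨(u, u'), h⟩ = (a r).symm then 1 else 0 := by
      funext r
      simp only [Walk.arcFlow, Walk.darts_cons, List.count_cons, beq_iff_eq, Pi.add_apply]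
      push_cast
      abel
    rw [this, mulVec_add, ih, incidenceMatrix_mulVec_dart hinj hsurj]
    abel

end SimpleGraph

section Network

variable {V ρ ι : Type}

lemma treePath_isPath {T : SimpleGraph V} (hT : T.IsTree) (u v : V) :
    (treePath hT u v).IsPath :=
  (hT.existsUnique_path u v).choose_spec.1

lemma networkMatrix_apply_eq_arcFlow [DecidableEq V] (T : SimpleGraph V) (hT : T.IsTree)
    (tt th : ρ → V) (hadj : ∀ r, T.Adj (tt r) (th r)) (tl hd : ι → V) (r : ρ) (e : ι) :
    networkMatrix T hT tt th hadj tl hd r e =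
      (treePath hT (tl e) (hd e)).arcFlow ℝ (fun r => ⟨(tt r, th r), hadj r⟩) r := by
  have hp := (treePath_isPath hT (tl e) (hd e)).isTrail
  have hnd : (treePath hT (tl e) (hd e)).darts.Nodup := hp.edges_nodup.of_map _
  set d : T.Dart := ⟨(tt r, th r), hadj r⟩
  have hsymm : (⟨(th r, tt r), (hadj r).symm⟩ : T.Dart) = d.symm := rfl
  simp only [networkMatrix, of_apply, SimpleGraph.Walk.arcFlow, hsymm]
  split_ifs with h₁ h₂
  · rw [List.count_eq_one_of_mem hnd h₁, List.count_eq_zero.2 (hp.symm_notMem_darts h₁)]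
    norm_num
  · rw [List.count_eq_zero.2 h₁, List.count_eq_one_of_mem hnd h₂]
    norm_num
  · rw [List.count_eq_zero.2 h₁, List.count_eq_zero.2 h₂]
    norm_num

theorem incidenceMatrix_mul_networkMatrix [DecidableEq V] [Fintype ρ] (T : SimpleGraph V)
    (hT : T.IsTree) (tt th : ρ → V) (hadj : ∀ r, T.Adj (tt r) (th r)) (tl hd : ι → V)
    (hinj : Function.Injective fun r => s(tt r, th r))
    (hsurj : ∀ e ∈ T.edgeSet, ∃ r, s(tt r, th r) = e) :
    incidenceMatrix ℝ tt th * networkMatrix T hT tt th hadj tl hd = incidenceMatrix ℝ tl hd := by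
  ext v e
  have := congrFun (SimpleGraph.incidenceMatrix_mulVec_arcFlow (R := ℝ)
    (a := fun r => ⟨(tt r, th r), hadj r⟩) hinj hsurj (treePath hT (tl e) (hd e))) v
  simpa [mul_apply, mulVec, dotProduct, networkMatrix_apply_eq_arcFlow, incidenceMatrix] using this

end Network

/-- **Every network matrix is totally unimodular.** -/
theorem networkMatrix_isTotallyUnimodular
    {V ρ ι : Type} [Fintype V] (T : SimpleGraph V) (hT : T.IsTree)
    (tt th : ρ → V) (hadj : ∀ r, T.Adj (tt r) (th r)) (tl hd : ι → V)
    (hinj : Function.Injective fun r => s(tt r, th r))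
    (hsurj : ∀ e ∈ T.edgeSet, ∃ r, s(tt r, th r) = e) :
    (networkMatrix T hT tt th hadj tl hd).IsTotallyUnimodular := by
  classical
  have : Fintype ρ := Fintype.ofInjective (fun r => (⟨s(tt r, th r), hadj r⟩ : T.edgeSet))
    fun r r' h => hinj (congrArg Subtype.val h)
  obtain ⟨w⟩ := hT.connected.nonempty
  obtain ⟨σ⟩ :=
    hT.nonempty_equiv_compl_singleton (a := fun r => ⟨(tt r, th r), hadj r⟩) hinj hsurj w
  let B := (incidenceMatrix ℝ tt th).submatrix (fun r => (σ r : V)) id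
  have hBmul {κ : Type} (tl' hd' : κ → V) :
      B * networkMatrix T hT tt th hadj tl' hd' =
        (incidenceMatrix ℝ tl' hd').submatrix (fun r => (σ r : V)) id := by
    rw [← incidenceMatrix_mul_networkMatrix T hT tt th hadj tl' hd' hinj hsurj,
      submatrix_mul _ _ _ id _ Function.bijective_id, submatrix_id_id]
  refine isTotallyUnimodular_of_mul_fromCols_one (B := B) ?_ ?_
  · -- the network matrix of the arcs from `w` to all other vertices is an inverse of `B`
    refine isUnit_det_of_right_inverse
      (B := networkMatrix T hT tt th hadj (fun _ => w) fun r => σ r) ?_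
    ext r r'
    simp [hBmul, incidenceMatrix, one_apply, (σ r).2, Pi.single_apply, Subtype.val_inj]
  · have : fromCols B (B * networkMatrix T hT tt th hadj tl hd) =
        (incidenceMatrix ℝ (Sum.elim tt tl) (Sum.elim th hd)).submatrix
          (fun r => (σ r : V)) id := by
      rw [hBmul]
      ext r (e | e) <;> rfl
    rw [mul_fromCols, mul_one, this]
    exact (incidenceMatrix_isTotallyUnimodular _ _).submatrix _ _
end
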